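/- Let s ≥ 2 and let P_m be a dyadic digital (t_m, m, s)-net in base 2 with t_m ≤ (1/10)·log₂ m. Let J = (J_1, J_2, J_3) be a partition of {1,…,s} with #J_i = d_i and d_1 < s. Then for every pair k = (k_1, k_2) with 1 ≤ k_1, k_2 ≤ m, |Υ_{d_1,d_2,d_3,J,k}| ≪ m^{2(s−2) + 3/5}, where the implied constant depends only on s. -/

import Mathlib

open MeasureTheory Filter

noncomputable section

attribute [local instance] Classical.propDecidable

/-- The `a`-th binary digit (`a ≥ 1`) of the dyadic expansion of `x ∈ [0,1)`
(the finite expansion is used for dyadic rationals). -/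
def bdigit (a : ℕ) (x : ℝ) : ℕ := (⌊x * 2 ^ a⌋).toNat % 2

/-- Digitwise addition modulo 2 of dyadic expansions: `x ⊕ y`. -/
def xorReal (x y : ℝ) : ℝ :=
  ∑' a : ℕ, (((bdigit (a + 1) x + bdigit (a + 1) y) % 2 : ℕ) : ℝ) / 2 ^ (a + 1)

/-- Coordinatewise digitwise addition `⊕` on vectors. -/
def xorVec {s : ℕ} (X Y : Fin s → ℝ) : Fin s → ℝ := fun i => xorReal (X i) (Y i)

/-- Local discrepancy `D(P, Y)` of a finite point set `P` in `[0,1)^s`. -/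
def Dloc {N s : ℕ} (P : Fin N → Fin s → ℝ) (Y : Fin s → ℝ) : ℝ :=
  (∑ n : Fin N, if ∀ i, 0 ≤ P n i ∧ P n i < Y i then (1 : ℝ) else 0) -
    (N : ℝ) * ∏ i, Y i

/-- `P` is a `(t,m,s)`-net in base 2: every elementary dyadic box of volume
`2^(t-m)` contains exactly `2^t` of the points. -/
def IsNet (t m s : ℕ) (P : Fin (2 ^ m) → Fin s → ℝ) : Prop :=
  ∀ d a : Fin s → ℕ, (∀ i, a i < 2 ^ d i) → (∑ i, d i) + t = m →
    (Finset.univ.filter fun n => ∀ i,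
        (a i : ℝ) / 2 ^ d i ≤ P n i ∧ P n i < ((a i : ℝ) + 1) / 2 ^ d i).card = 2 ^ t

/-- The digits `x_{n,i,j}` of the `n`-th point of the dyadic digital net with
generating matrices `C`. -/
def netDig (m s : ℕ) (C : Fin s → Matrix (Fin m) (Fin m) (ZMod 2)) (n : ℕ) :
    Fin s → Fin m → ZMod 2 :=
  fun i j => ∑ r : Fin m, C i j r * (if n.testBit r then 1 else 0)

/-- The `n`-th point of the dyadic digital net with generating matrices `C`. -/
def netPoint (m s : ℕ) (C : Fin s → Matrix (Fin m) (Fin m) (ZMod 2)) (n : ℕ) :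
    Fin s → ℝ :=
  fun i => ∑ j : Fin m, ((netDig m s C n i j).val : ℝ) / 2 ^ ((j : ℕ) + 1)

/-- The unit cube `[0,1]^s`. -/
def cube (s : ℕ) : Set (Fin s → ℝ) := Set.univ.pi fun _ => Set.Icc (0 : ℝ) 1

/-- The point of `Q^s(2^m)` with coordinates `T i / 2^m`. -/
def Qpt {s : ℕ} (m : ℕ) (T : Fin s → Fin (2 ^ m)) : Fin s → ℝ :=
  fun i => ((T i : ℕ) : ℝ) / 2 ^ m

/-- `M_{s,p}(P) = (2^{-sm} ∑_{T ∈ Q^s(2^m)} ∫_{[0,1]^s} |D(P ⊕ T, Y)|^p dY)^{1/p}`. -/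
def Msp (s m : ℕ) (p : ℝ) {N : ℕ} (P : Fin N → Fin s → ℝ) : ℝ :=
  ((2 : ℝ) ^ (-(s * m : ℤ)) * ∑ T : Fin s → Fin (2 ^ m),
      ∫ Y in cube s, |Dloc (fun n => xorVec (P n) (Qpt m T)) Y| ^ p) ^ (1 / p)

/-- The standard normal distribution function `Φ`. -/
def PhiCDF (w : ℝ) : ℝ :=
  (Real.sqrt (2 * Real.pi))⁻¹ * ∫ u in Set.Iio w, Real.exp (-u ^ 2 / 2)

/-- `χ_p`, the `p`-th absolute moment of the standard Gaussian. -/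
def chiMoment (p : ℝ) : ℝ :=
  (Real.sqrt (2 * Real.pi))⁻¹ * ∫ u : ℝ, |u| ^ p * Real.exp (-u ^ 2 / 2)

/-- Digits `y_{n,i,j}` of the points of the dyadic digital sequence generated by
the `ℕ × ℕ` matrices `C` over `F_2`. -/
def seqDig (s : ℕ) (C : Fin s → ℕ → ℕ → ZMod 2) (n : ℕ) : Fin s → ℕ → ZMod 2 :=
  fun i j => ∑ r ∈ Finset.range (n + 1), C i j r * (if n.testBit r then 1 else 0)

/-- The `n`-th point of the dyadic digital sequence generated by `C`. -/
def seqPoint (s : ℕ) (C : Fin s → ℕ → ℕ → ZMod 2) (n : ℕ) : Fin s → ℝ :=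
  fun i => ∑' j : ℕ, ((seqDig s C n i j).val : ℝ) / 2 ^ (j + 1)

/-- The digital sequence generated by `C` is a dyadic digital `(T,s)`-sequence:
for all `m ≥ 1` and `k ≥ 0` the block `X_{k2^m}, …, X_{k2^m+2^m-1}` is a
`(T(m),m,s)`-net in base 2. -/
def IsTSeq (s : ℕ) (Tf : ℕ → ℕ) (C : Fin s → ℕ → ℕ → ZMod 2) : Prop :=
  (∀ m, Tf m ≤ m) ∧
  ∀ m, 1 ≤ m → ∀ k : ℕ,
    IsNet (Tf m) m s fun n : Fin (2 ^ m) => seqPoint s C (k * 2 ^ m + (n : ℕ))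

/-- The dual net `P_m^⊥` of the digital net generated by `C`. -/
def dualNet (m s : ℕ) (C : Fin s → Matrix (Fin m) (Fin m) (ZMod 2)) :
    Finset (Fin s → Fin m → ZMod 2) :=
  Finset.univ.filter fun mm => ∀ n : Fin (2 ^ m),
    (∑ i, ∑ j, mm i j * netDig m s C (n : ℕ) i j) = 0

/-- `ρ(b)`: the position of the last nonzero digit (`ρ(0) = 0`). -/
def rhoF {m : ℕ} (b : Fin m → ZMod 2) : ℕ :=
  (Finset.univ.filter fun j => b j ≠ 0).sup fun j => (j : ℕ) + 1

/-- The 1-indexed component `𝔪_{i,a}` (as `0` or `1`), with the convention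
`𝔪_{i,0} = 0`. -/
def mAt {m : ℕ} (b : Fin m → ZMod 2) (a : ℕ) : ℕ :=
  if h : 1 ≤ a ∧ a ≤ m then (b ⟨a - 1, by omega⟩).val else 0

/-- The 1-indexed digit of a digit array, with the convention that digit `0`
and digits beyond `m` are `0`. -/
def dAt {m : ℕ} (y : Fin m → Fin 2) (a : ℕ) : ℕ :=
  if h : 1 ≤ a ∧ a ≤ m then (y ⟨a - 1, by omega⟩).val else 0

/-- `κ(A)`: the number of nonzero entries of `A`. -/
def kapF {s : ℕ} (A : Fin s → ℕ) : ℕ := (Finset.univ.filter fun i => A i ≠ 0).card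

/-- `a₀(A) = a₁ + ⋯ + a_s`. -/
def a0F {s : ℕ} (A : Fin s → ℕ) : ℕ := ∑ i, A i

/-- `Λ_A(T ⊕ Y^{(m)})` as a function of the digit arrays `t`, `y` of `T`, `Y`:
`∑_{𝔪 ∈ P^{⊥,*}, ρ(𝔪_i) ≤ a_i} e(∑_i (∑_j 𝔪_{i,j}(t_{i,j}+y_{i,j}) + 𝔪_{i,a_i}))`,
where `e(n) = exp(πin) = (-1)^n`. -/
def LamF (m s : ℕ) (C : Fin s → Matrix (Fin m) (Fin m) (ZMod 2)) (A : Fin s → ℕ)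
    (t y : Fin s → Fin m → Fin 2) : ℝ :=
  ∑ mm ∈ (dualNet m s C).filter fun mm => mm ≠ 0 ∧ ∀ i, rhoF (mm i) ≤ A i,
    (-1 : ℝ) ^
      (∑ i, ((∑ j, (mm i j).val * ((t i j : ℕ) + (y i j : ℕ))) + mAt (mm i) (A i)))

/-- The Rademacher function `r_A(Y)` as a function of the digit array of `Y`. -/
def rademF {m s : ℕ} (A : Fin s → ℕ) (y : Fin s → Fin m → Fin 2) : ℝ :=
  ∏ i, (-1 : ℝ) ^ dAt (y i) (A i)

/-- `Ψ_A = (-1)^{κ(A)} 2^{m-s-a₀(A)} r_A(Y) Λ_A(T ⊕ Y^{(m)})` at digit level. -/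
def PsiF (m s : ℕ) (C : Fin s → Matrix (Fin m) (Fin m) (ZMod 2)) (A : Fin s → ℕ)
    (t y : Fin s → Fin m → Fin 2) : ℝ :=
  (-1 : ℝ) ^ kapF A * (2 : ℝ) ^ ((m : ℤ) - (s : ℤ) - (a0F A : ℤ)) *
    rademF A y * LamF m s C A t y

/-- `V₀ = 10 log₂ m`. -/
def V0 (m : ℕ) : ℝ := 10 * Real.logb 2 m

/-- `I_{m,s,k} = {A ∈ I_m^s : max_i a_i = k, a₀(A) ∈ (m - t_m, m + V₀)}`. -/
def IndexSet (m s tm k : ℕ) : Finset (Fin s → ℕ) :=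
  (Fintype.piFinset fun _ : Fin s => Finset.range (m + 1)).filter fun A =>
    Finset.univ.sup A = k ∧ ((m : ℝ) - tm < a0F A ∧ (a0F A : ℝ) < m + V0 m)

/-- `I_{m,s,m+1} = {A ∈ I_m^s : a₀(A) ≥ m + V₀}`. -/
def IndexTail (m s : ℕ) : Finset (Fin s → ℕ) :=
  (Fintype.piFinset fun _ : Fin s => Finset.range (m + 1)).filter fun A =>
    (m : ℝ) + V0 m ≤ (a0F A : ℝ)

/-- `𝔇_k(T,Y) = ∑_{A ∈ I_{m,s,k}} Ψ_A` at digit level. -/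
def DDk (m s tm : ℕ) (C : Fin s → Matrix (Fin m) (Fin m) (ZMod 2)) (k : ℕ)
    (t y : Fin s → Fin m → Fin 2) : ℝ :=
  ∑ A ∈ IndexSet m s tm k, PsiF m s C A t y

/-- `R(T,Y) = ∑_{A ∈ I_{m,s,m+1}} Ψ_A` at digit level. -/
def Rtail (m s : ℕ) (C : Fin s → Matrix (Fin m) (Fin m) (ZMod 2))
    (t y : Fin s → Fin m → Fin 2) : ℝ :=
  ∑ A ∈ IndexTail m s, PsiF m s C A t y

/-- `E^{(m)}_{Y,T}(f)`: the average of `f` over all digit arrays. -/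
def Em (m s : ℕ) (f : (Fin s → Fin m → Fin 2) → (Fin s → Fin m → Fin 2) → ℝ) : ℝ :=
  (2 : ℝ) ^ (-(2 * s * m : ℤ)) *
    ∑ t : Fin s → Fin m → Fin 2, ∑ y : Fin s → Fin m → Fin 2, f t y

/-- Keep the first `k` digits of `t`, replace the remaining ones by those of `t'`. -/
def mergeDig {m s : ℕ} (k : ℕ) (t t' : Fin s → Fin m → Fin 2) :
    Fin s → Fin m → Fin 2 :=
  fun i j => if (j : ℕ) < k then t i j else t' i j

/-- The conditional expectation `E^{(m)}_{Y,T}(f | F_k)` with respect to the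
σ-field `F_k` generated by the dyadic cubes of side `2^{-k}`: the average of `f`
over the digits of index `> k`, as a function of the digit arrays `t`, `y`. -/
def EmCond (m s k : ℕ)
    (f : (Fin s → Fin m → Fin 2) → (Fin s → Fin m → Fin 2) → ℝ)
    (t y : Fin s → Fin m → Fin 2) : ℝ :=
  (2 : ℝ) ^ (-(2 * s * m : ℤ)) *
    ∑ t' : Fin s → Fin m → Fin 2, ∑ y' : Fin s → Fin m → Fin 2,
      f (mergeDig k t t') (mergeDig k y y')

/-- `Θ_{A₁,A₂,k} = E^{(m)}_{Y,T}(Ψ_{A₁}Ψ_{A₂} | F_{k-1}) - E^{(m)}_{Y,T}(Ψ_{A₁}Ψ_{A₂})`. -/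
def ThetaF (m s : ℕ) (C : Fin s → Matrix (Fin m) (Fin m) (ZMod 2))
    (A1 A2 : Fin s → ℕ) (k : ℕ) (t y : Fin s → Fin m → Fin 2) : ℝ :=
  EmCond m s (k - 1) (fun t' y' => PsiF m s C A1 t' y' * PsiF m s C A2 t' y') t y -
    Em m s fun t' y' => PsiF m s C A1 t' y' * PsiF m s C A2 t' y'

/-- `Υ_{d₁,d₂,d₃,J,k}` for a partition `J = (J₁,J₂,J₃)` of `{1,…,s}` and
`k = (k₁,k₂)`. -/
def Ups (m s tm : ℕ) (C : Fin s → Matrix (Fin m) (Fin m) (ZMod 2))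
    (J1 J2 J3 : Finset (Fin s)) (k1 k2 : ℕ) : ℝ :=
  ∑ A1 ∈ IndexSet m s tm k1, ∑ A2 ∈ IndexSet m s tm k1,
    ∑ A3 ∈ IndexSet m s tm k2, ∑ A4 ∈ IndexSet m s tm k2,
      (Em m s fun t y => ThetaF m s C A1 A2 k1 t y * ThetaF m s C A3 A4 k2 t y) *
        (if (Finset.univ.filter fun i => A1 i = A2 i) = J1 ∧
            (Finset.univ.filter fun i => A1 i < A2 i) = J2 ∧
            (Finset.univ.filter fun i => A2 i < A1 i) = J3 ∧
            (Finset.univ.filter fun i => A3 i = A4 i) = J1 ∧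
            (Finset.univ.filter fun i => A3 i < A4 i) = J2 ∧
            (Finset.univ.filter fun i => A4 i < A3 i) = J3 then (1 : ℝ) else 0)

/-- The array of the first `m` dyadic digits of the coordinates of `Y`. -/
def digitsOf (m s : ℕ) (Y : Fin s → ℝ) : Fin s → Fin m → Fin 2 :=
  fun i j => ⟨bdigit ((j : ℕ) + 1) (Y i), by unfold bdigit; omega⟩

/-- Truncation `y^{(m)}` to the first `m` dyadic digits. -/
def truncR (m : ℕ) (y : ℝ) : ℝ :=
  ∑ j ∈ Finset.range m, (bdigit (j + 1) y : ℝ) / 2 ^ (j + 1)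

/-- The elementary interval `Π_a` (`Π_0 = [0,1)`, `Π_a = [2^{-a}, 2^{1-a})`). -/
def PiBox (a : ℕ) : Set ℝ :=
  if a = 0 then Set.Ico 0 1 else Set.Ico ((2 : ℝ) ^ (-(a : ℤ))) ((2 : ℝ) ^ (1 - (a : ℤ)))

/-- `λ_A(Y) = 1_{Π_A}(Y) - vol(Π_A)`. -/
def lamA {s : ℕ} (A : Fin s → ℕ) (Y : Fin s → ℝ) : ℝ :=
  (if ∀ i, Y i ∈ PiBox (A i) then (1 : ℝ) else 0) - (2 : ℝ) ^ (-(a0F A : ℤ))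

/-- The micro-local discrepancy `λ_A(P_m^{(m)} ⊕ T ⊕ Y^{(m)})`. -/
def lamNet (m s : ℕ) (C : Fin s → Matrix (Fin m) (Fin m) (ZMod 2))
    (T Y : Fin s → ℝ) (A : Fin s → ℕ) : ℝ :=
  ∑ n : Fin (2 ^ m),
    lamA A fun i =>
      xorReal (xorReal (truncR m (netPoint m s C (n : ℕ) i)) (T i)) (truncR m (Y i))

/-- The Rademacher function `r_A(Y)` for a real point `Y`. -/
def rademReal {s : ℕ} (A : Fin s → ℕ) (Y : Fin s → ℝ) : ℝ :=
  ∏ i, if A i = 0 then (1 : ℝ) else 1 - 2 * (bdigit (A i) (Y i) : ℝ)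

/-- The truncated discrepancy
`D^{(m)}(P_m ⊕ T, Y) = 2^{-s} ∑_{A ∈ I_m^s} (-1)^{κ(A)} λ_A(P_m^{(m)} ⊕ T ⊕ Y^{(m)}) r_A(Y)`. -/
def Dm (m s : ℕ) (C : Fin s → Matrix (Fin m) (Fin m) (ZMod 2)) (T Y : Fin s → ℝ) : ℝ :=
  (2 : ℝ) ^ (-(s : ℤ)) *
    ∑ A ∈ Fintype.piFinset fun _ : Fin s => Finset.range (m + 1),
      (-1 : ℝ) ^ kapF A * lamNet m s C T Y A * rademReal A Y

/-- `𝔼_{Y,T,m}(f) = 2^{-sm} ∑_{T ∈ Q^s(2^m)} ∫_{[0,1]^s} f(T,Y) dY`. -/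
def EE (m s : ℕ) (f : (Fin s → ℝ) → (Fin s → ℝ) → ℝ) : ℝ :=
  (2 : ℝ) ^ (-(s * m : ℤ)) * ∑ T : Fin s → Fin (2 ^ m), ∫ Y in cube s, f (Qpt m T) Y

section Statement13Aux

open Finset

lemma neg_one_pow_mod2 (a b : ℕ) (h : a % 2 = b % 2) : (-1 : ℝ) ^ a = (-1) ^ b := by
  conv_lhs => rw [← Nat.div_add_mod a 2]
  conv_rhs => rw [← Nat.div_add_mod b 2]
  rw [h, pow_add, pow_add, pow_mul, pow_mul]
  norm_num

lemma binrep : ∀ (d : ℕ) (v w : ℕ → ℕ), (∀ j, j < d → v j ≤ 1) → (∀ j, j < d → w j ≤ 1) →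
    (∑ j ∈ Finset.range d, v j * 2 ^ (d - 1 - j)) = (∑ j ∈ Finset.range d, w j * 2 ^ (d - 1 - j)) →
    ∀ j, j < d → v j = w j := by
  intro d
  induction d with
  | zero => intro v w _ _ _ j hj; omega
  | succ d ih =>
    intro v w hv hw h j hj
    have e1 : ∀ (u : ℕ → ℕ), ∑ j ∈ Finset.range (d+1), u j * 2 ^ (d + 1 - 1 - j)
        = 2 * (∑ j ∈ Finset.range d, u j * 2 ^ (d - 1 - j)) + u d := by
      intro u
      rw [Finset.sum_range_succ, Finset.mul_sum]
      congr 1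
      · apply Finset.sum_congr rfl
        intro x hx
        have hx' : x < d := Finset.mem_range.mp hx
        have hexp : d + 1 - 1 - x = (d - 1 - x) + 1 := by omega
        rw [hexp, pow_succ]
        ring
      · simp
    rw [e1 v, e1 w] at h
    have hvd := hv d (by omega)
    have hwd := hw d (by omega)
    have hd : v d = w d := by omega
    have hsum : (∑ j ∈ Finset.range d, v j * 2 ^ (d - 1 - j))
        = ∑ j ∈ Finset.range d, w j * 2 ^ (d - 1 - j) := by omega
    rcases Nat.lt_or_ge j d with hj' | hj'
    · exact ih v w (fun j hj => hv j (by omega)) (fun j hj => hw j (by omega)) hsum j hj'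
    · have : j = d := by omega
      subst this; exact hd

lemma sum_two_pow (d : ℕ) : ∑ j ∈ Finset.range d, 2 ^ j = 2 ^ d - 1 := by
  induction d with
  | zero => simp
  | succ d ih =>
    rw [Finset.sum_range_succ, ih]
    have : 1 ≤ 2 ^ d := Nat.one_le_two_pow
    omega

lemma sum_Ico_half (N : ℕ) : ∀ M, N ≤ M →
    ∑ j ∈ Finset.Ico N M, ((1:ℝ)/2^(j+1)) = 1/2^N - 1/2^M := by
  intro M
  induction M with
  | zero => intro h; interval_cases N; simp
  | succ M ih =>
    intro h
    rcases Nat.lt_or_ge N (M+1) with h' | h'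
    · have hNM : N ≤ M := by omega
      rw [Finset.sum_Ico_succ_top hNM, ih hNM]
      have h2 : (2:ℝ)^(M+1) = 2^M * 2 := by ring
      field_simp
      ring
    · have : N = M + 1 := by omega
      subst this; simp

lemma box_unique (d a a' : ℕ) (x : ℝ) (h1 : (a:ℝ)/2^d ≤ x) (h2 : x < ((a:ℝ)+1)/2^d)
    (h3 : (a':ℝ)/2^d ≤ x) (h4 : x < ((a':ℝ)+1)/2^d) : a = a' := by
  have hp : (0:ℝ) < 2^d := by positivity
  have c1 : (a:ℝ) < (a':ℝ)+1 := by
    have := h1.trans_lt h4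
    rw [div_lt_div_iff₀ hp hp] at this
    nlinarith
  have c2 : (a':ℝ) < (a:ℝ)+1 := by
    have := h3.trans_lt h2
    rw [div_lt_div_iff₀ hp hp] at this
    nlinarith
  have : a < a' + 1 := by exact_mod_cast c1
  have : a' < a + 1 := by exact_mod_cast c2
  omega

lemma box_core (m d : ℕ) (hdm : d ≤ m) (v : ℕ → ℕ) (hv : ∀ j, v j ≤ 1) :
    (∑ j ∈ Finset.range d, v j * 2 ^ (d - 1 - j)) < 2 ^ d ∧
    ((∑ j ∈ Finset.range d, v j * 2 ^ (d - 1 - j) : ℕ) : ℝ) / 2 ^ d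
      ≤ ∑ j ∈ Finset.range m, (v j : ℝ) / 2 ^ (j + 1) ∧
    (∑ j ∈ Finset.range m, (v j : ℝ) / 2 ^ (j + 1))
      < (((∑ j ∈ Finset.range d, v j * 2 ^ (d - 1 - j) : ℕ) : ℝ) + 1) / 2 ^ d := by
  set a : ℕ := ∑ j ∈ Finset.range d, v j * 2 ^ (d - 1 - j) with ha
  have hp : (0:ℝ) < 2^d := by positivity
  have h1 : a < 2 ^ d := by
    have hle : a ≤ ∑ j ∈ Finset.range d, 2 ^ (d - 1 - j) := by
      apply Finset.sum_le_sum
      intro j hj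
      have := hv j
      nlinarith [Nat.two_pow_pos (d-1-j)]
    have hrefl : ∑ j ∈ Finset.range d, 2 ^ (d - 1 - j) = ∑ j ∈ Finset.range d, 2 ^ j :=
      Finset.sum_range_reflect (fun j => 2 ^ j) d
    rw [hrefl, sum_two_pow] at hle
    have : 1 ≤ 2 ^ d := Nat.one_le_two_pow
    omega
  -- split the sum
  have hsplit : ∑ j ∈ Finset.range m, (v j : ℝ) / 2 ^ (j + 1)
      = (∑ j ∈ Finset.range d, (v j : ℝ) / 2 ^ (j + 1))
        + ∑ j ∈ Finset.Ico d m, (v j : ℝ) / 2 ^ (j + 1) := by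
    rw [Finset.range_eq_Ico, ← Finset.sum_Ico_consecutive _ (Nat.zero_le d) hdm,
      ← Finset.range_eq_Ico]
  have hfirst : (∑ j ∈ Finset.range d, (v j : ℝ) / 2 ^ (j + 1)) = (a:ℝ) / 2^d := by
    rw [ha]
    push_cast
    rw [Finset.sum_div]
    apply Finset.sum_congr rfl
    intro j hj
    have hjd : j < d := Finset.mem_range.mp hj
    have hexp : (2:ℝ) ^ (d - 1 - j) * 2 ^ (j+1) = 2 ^ d := by
      rw [← pow_add]
      congr 1
      omega
    have h2j : (0:ℝ) < 2 ^ (j+1) := by positivity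
    field_simp
    nlinarith [hexp]
  have htail0 : 0 ≤ ∑ j ∈ Finset.Ico d m, (v j : ℝ) / 2 ^ (j + 1) := by
    apply Finset.sum_nonneg; intro j _; positivity
  have htail1 : ∑ j ∈ Finset.Ico d m, (v j : ℝ) / 2 ^ (j + 1) < 1 / 2^d := by
    have hle : ∑ j ∈ Finset.Ico d m, (v j : ℝ) / 2 ^ (j + 1)
        ≤ ∑ j ∈ Finset.Ico d m, (1:ℝ) / 2 ^ (j + 1) := by
      apply Finset.sum_le_sum
      intro j _
      gcongr
      exact_mod_cast hv j
    rw [sum_Ico_half d m hdm] at hle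
    have : (0:ℝ) < 1/2^m := by positivity
    linarith
  constructor
  · exact h1
  constructor
  · rw [hsplit, hfirst]; linarith
  · rw [hsplit, hfirst]
    have : ((a:ℝ)+1)/2^d = (a:ℝ)/2^d + 1/2^d := by ring
    rw [this]
    linarith

end Statement13Aux
section Statement13Aux2

open Finset

def e2 (z : ZMod 2) : ℝ := if z = 1 then -1 else 1

lemma zmod2_cases : ∀ z : ZMod 2, z = 0 ∨ z = 1 := by decide

lemma e2_zero : e2 0 = 1 := by simp [e2]

lemma e2_one : e2 1 = -1 := by simp [e2]

lemma e2_add (a b : ZMod 2) : e2 (a + b) = e2 a * e2 b := by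
  rcases zmod2_cases a with ha | ha <;> rcases zmod2_cases b with hb | hb <;>
    subst ha <;> subst hb <;>
    simp [e2, show ((1:ZMod 2) + 1) = 0 from rfl]

lemma zmod2_ne_zero {z : ZMod 2} (h : z ≠ 0) : z = 1 := by
  rcases zmod2_cases z with h' | h' <;> tauto

lemma zmod2_val_inj : ∀ z w : ZMod 2, z.val = w.val → z = w := by decide

lemma rhoF_le_iff {m : ℕ} (b : Fin m → ZMod 2) (a : ℕ) :
    rhoF b ≤ a ↔ ∀ j : Fin m, a ≤ (j:ℕ) → b j = 0 := by
  rw [rhoF, Finset.sup_le_iff]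
  constructor
  · intro h j hj
    by_contra hne
    have := h j (Finset.mem_filter.mpr ⟨Finset.mem_univ _, hne⟩)
    omega
  · intro h j hj
    rw [Finset.mem_filter] at hj
    by_contra hlt
    push_neg at hlt
    exact hj.2 (h j (by omega))

lemma dualNet_add {m s : ℕ} {C : Fin s → Matrix (Fin m) (Fin m) (ZMod 2)}
    {a b : Fin s → Fin m → ZMod 2}
    (ha : a ∈ dualNet m s C) (hb : b ∈ dualNet m s C) : a + b ∈ dualNet m s C := by
  rw [dualNet, Finset.mem_filter] at ha hb ⊢
  refine ⟨Finset.mem_univ _, fun n => ?_⟩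
  simp only [Pi.add_apply, add_mul, Finset.sum_add_distrib, ha.2 n, hb.2 n, add_zero]

lemma netPoint_eq_rangeSum (m s : ℕ) (C : Fin s → Matrix (Fin m) (Fin m) (ZMod 2))
    (n : ℕ) (i : Fin s) :
    netPoint m s C n i = ∑ j ∈ Finset.range m,
      (((if h : j < m then (netDig m s C n i ⟨j, h⟩).val else 0) : ℕ) : ℝ) / 2 ^ (j + 1) := by
  rw [netPoint, ← Fin.sum_univ_eq_sum_range
    (fun j => (((if h : j < m then (netDig m s C n i ⟨j, h⟩).val else 0) : ℕ) : ℝ) / 2 ^ (j + 1)) m]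
  apply Finset.sum_congr rfl
  intro j _
  rw [dif_pos j.isLt]

lemma net_vanish (m s tm : ℕ) (C : Fin s → Matrix (Fin m) (Fin m) (ZMod 2))
    (hnet : IsNet tm m s (fun n : Fin (2 ^ m) => netPoint m s C (n : ℕ)))
    (mm : Fin s → Fin m → ZMod 2) (hdual : mm ∈ dualNet m s C) (hne : mm ≠ 0)
    (A : Fin s → ℕ) (hAm : ∀ i, A i ≤ m) (hrho : ∀ i, rhoF (mm i) ≤ A i)
    (hsum : (∑ i, A i) + tm = m) : False := by
  classical
  have hmm0 : ∀ (i : Fin s) (j : Fin m), A i ≤ (j:ℕ) → mm i j = 0 :=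
    fun i => (rhoF_le_iff (mm i) (A i)).mp (hrho i)
  set T : Fin (2^m) → (Fin s → Fin m → ZMod 2) :=
    fun n i j => if (j:ℕ) < A i then netDig m s C (n:ℕ) i j else 0 with hT
  set B : Finset (Fin s → Fin m → ZMod 2) :=
    Fintype.piFinset (fun i => Fintype.piFinset (fun j =>
      if (j:ℕ) < A i then (Finset.univ : Finset (ZMod 2)) else {0})) with hB
  set φ : (Fin s → Fin m → ZMod 2) → ZMod 2 := fun b => ∑ i, ∑ j, mm i j * b i j with hφ
  have step1 : ∀ n : Fin (2^m), φ (T n) = 0 := by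
    intro n
    have hd : (∑ i, ∑ j, mm i j * netDig m s C (n:ℕ) i j) = 0 := by
      rw [dualNet, Finset.mem_filter] at hdual
      exact hdual.2 n
    rw [hφ]
    dsimp only
    rw [← hd]
    apply Finset.sum_congr rfl; intro i _
    apply Finset.sum_congr rfl; intro j _
    by_cases hj : (j:ℕ) < A i
    · simp [hT, hj]
    · simp [hT, hj, hmm0 i j (by omega)]
  -- fibers have cardinality 2^tm
  have fiber : ∀ b ∈ B, (Finset.univ.filter fun n : Fin (2^m) => T n = b).card = 2 ^ tm := by
    intro b hb
    have hbz : ∀ (i : Fin s) (j : Fin m), A i ≤ (j:ℕ) → b i j = 0 := by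
      intro i j hj
      rw [hB, Fintype.mem_piFinset] at hb
      have h1 := hb i
      rw [Fintype.mem_piFinset] at h1
      have h2 := h1 j
      rw [if_neg (by omega)] at h2
      simpa using h2
    set bv : Fin s → ℕ → ℕ := fun i j => if h : j < m then (b i ⟨j, h⟩).val else 0 with hbv
    set aIdx : Fin s → ℕ := fun i => ∑ j ∈ Finset.range (A i), bv i j * 2 ^ (A i - 1 - j)
      with haIdx
    have hbv1 : ∀ i j, bv i j ≤ 1 := by
      intro i j; rw [hbv]; dsimp only; split
      · have := ZMod.val_lt (b i ⟨j, ‹_›⟩); omega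
      · omega
    set vv : Fin (2^m) → Fin s → ℕ → ℕ :=
      fun n i j => if h : j < m then (netDig m s C (n:ℕ) i ⟨j, h⟩).val else 0 with hvv
    have hvv1 : ∀ n i j, vv n i j ≤ 1 := by
      intro n i j; rw [hvv]; dsimp only; split
      · have := ZMod.val_lt (netDig m s C (n:ℕ) i ⟨j, ‹_›⟩); omega
      · omega
    have hpt : ∀ (n : Fin (2^m)) i,
        netPoint m s C (n:ℕ) i = ∑ j ∈ Finset.range m, (vv n i j : ℝ) / 2^(j+1) := by
      intro n i
      rw [netPoint_eq_rangeSum]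
    have hbox := fun (n : Fin (2^m)) (i : Fin s) => box_core m (A i) (hAm i) (vv n i) (hvv1 n i)
    have hbbox := fun (i : Fin s) => box_core m (A i) (hAm i) (bv i) (hbv1 i)
    have haIdx_lt : ∀ i, aIdx i < 2 ^ A i := fun i => (hbbox i).1
    have key : ∀ n : Fin (2^m), T n = b ↔ ∀ i, (aIdx i : ℝ)/2^(A i) ≤ netPoint m s C (n:ℕ) i
        ∧ netPoint m s C (n:ℕ) i < ((aIdx i : ℝ)+1)/2^(A i) := by
      intro n
      constructor
      · intro hTb i
        have hdig : ∀ j, j < A i → vv n i j = bv i j := by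
          intro j hj
          have hjm : j < m := lt_of_lt_of_le hj (hAm i)
          have h3 := congrFun (congrFun hTb i) ⟨j, hjm⟩
          rw [hT] at h3
          dsimp only at h3
          rw [if_pos (by simpa using hj)] at h3
          rw [hvv, hbv]; dsimp only
          rw [dif_pos hjm, dif_pos hjm, h3]
        have haEq : (∑ j ∈ Finset.range (A i), vv n i j * 2 ^ (A i - 1 - j)) = aIdx i := by
          rw [haIdx]; dsimp only
          exact Finset.sum_congr rfl (fun j hj => by rw [hdig j (Finset.mem_range.mp hj)])
        have h2 := (hbox n i).2.1
        have h3 := (hbox n i).2.2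
        rw [haEq] at h2 h3
        rw [hpt n i]
        constructor
        · exact h2
        · exact_mod_cast h3
      · intro hin
        have hdig : ∀ i, ∀ j, j < A i → vv n i j = bv i j := by
          intro i
          have h2 := (hbox n i).2.1
          have h3 := (hbox n i).2.2
          rw [← hpt n i] at h2 h3
          have hu : (∑ j ∈ Finset.range (A i), vv n i j * 2 ^ (A i - 1 - j)) = aIdx i := by
            apply box_unique (A i) _ (aIdx i) (netPoint m s C (n:ℕ) i) h2 (by exact_mod_cast h3)
              (hin i).1 (hin i).2
          exact binrep (A i) (vv n i) (bv i) (fun j _ => hvv1 n i j) (fun j _ => hbv1 i j) hu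
        funext i j
        rw [hT]; dsimp only
        by_cases hj : (j:ℕ) < A i
        · rw [if_pos hj]
          have h4 := hdig i (j:ℕ) hj
          rw [hvv, hbv] at h4; dsimp only at h4
          rw [dif_pos j.isLt, dif_pos j.isLt] at h4
          simp only [Fin.eta] at h4
          exact zmod2_val_inj _ _ h4
        · rw [if_neg hj]
          exact (hbz i j (by omega)).symm
    have hnet' := hnet A aIdx haIdx_lt hsum
    rw [← hnet']
    congr 1
    apply Finset.filter_congr
    intro n _
    rw [key n]
  -- T n always lands in B
  have hTb : ∀ n, T n ∈ B := by
    intro n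
    rw [hB, Fintype.mem_piFinset]
    intro i
    rw [Fintype.mem_piFinset]
    intro j
    by_cases hj : (j:ℕ) < A i
    · rw [if_pos hj]; exact Finset.mem_univ _
    · rw [if_neg hj]; rw [hT]; dsimp only; rw [if_neg hj]; exact Finset.mem_singleton_self _
  set S : ℝ := ∑ n : Fin (2^m), e2 (φ (T n)) with hS
  have hS1 : S = (2:ℝ)^m := by
    have h1 : ∀ n : Fin (2^m), e2 (φ (T n)) = 1 := fun n => by rw [step1 n, e2_zero]
    rw [hS, Finset.sum_congr rfl (fun n _ => h1 n), Finset.sum_const, Finset.card_univ,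
      Fintype.card_fin, nsmul_eq_mul, mul_one]
    push_cast
    ring
  have hS2 : S = ∑ b ∈ B, (2:ℝ)^tm * e2 (φ b) := by
    rw [hS, ← Finset.sum_fiberwise_of_maps_to (fun n _ => hTb n) (fun n => e2 (φ (T n)))]
    apply Finset.sum_congr rfl
    intro b hb
    rw [Finset.sum_congr rfl (fun n hn => by rw [(Finset.mem_filter.mp hn).2]),
      Finset.sum_const, nsmul_eq_mul, fiber b hb]
    push_cast
    ring
  -- the inner character sum vanishes
  obtain ⟨i0, j0, hmj⟩ : ∃ i0 j0, mm i0 j0 ≠ 0 := by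
    by_contra hc
    push_neg at hc
    exact hne (funext fun i => funext fun j => hc i j)
  have hj0A : (j0:ℕ) < A i0 := by
    by_contra hc
    exact hmj (hmm0 i0 j0 (by omega))
  have hφflip : ∀ b : Fin s → Fin m → ZMod 2,
      φ (fun i j => b i j + if i = i0 ∧ j = j0 then 1 else 0) = φ b + mm i0 j0 := by
    intro b
    rw [hφ]
    dsimp only
    simp only [mul_add, Finset.sum_add_distrib, mul_ite, mul_one, mul_zero]
    congr 1
    rw [Finset.sum_eq_single i0]
    · rw [Finset.sum_eq_single j0]
      · simp
      · intro c _ hc; simp [hc]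
      · intro h; exact absurd (Finset.mem_univ j0) h
    · intro c _ hc
      apply Finset.sum_eq_zero
      intro j _
      simp [hc]
    · intro h; exact absurd (Finset.mem_univ i0) h
  have hinv : ∑ b ∈ B, e2 (φ b) = 0 := by
    apply Finset.sum_involution
      (g := fun b _ => fun i j => b i j + if i = i0 ∧ j = j0 then 1 else 0)
    · intro b hb
      rw [hφflip b, e2_add, zmod2_ne_zero hmj, e2_one]
      ring
    · intro b hb _
      intro hcontra
      have := congrFun (congrFun hcontra i0) j0
      simp only [if_pos (And.intro rfl rfl)] at this
      have h10 : (1 : ZMod 2) = 0 := by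
        have := congrArg (fun z => z - b i0 j0) this
        simpa using this
      exact absurd h10 (by decide)
    · intro b hb
      funext i j
      dsimp only
      by_cases hij : i = i0 ∧ j = j0
      · simp only [if_pos hij, add_assoc, show ((1:ZMod 2) + 1) = 0 from rfl, add_zero]
      · simp only [if_neg hij, add_zero]
    · intro b hb
      rw [hB, Fintype.mem_piFinset] at hb ⊢
      intro i
      have h1 := hb i
      rw [Fintype.mem_piFinset] at h1 ⊢
      intro j
      by_cases hij : i = i0 ∧ j = j0
      · rw [if_pos hij]
        obtain ⟨hi, hj⟩ := hij
        subst hi; subst hj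
        rw [if_pos hj0A]
        exact Finset.mem_univ _
      · rw [if_neg hij, add_zero]
        exact h1 j
  have : (2:ℝ)^m = 0 := by
    rw [← hS1, hS2, ← Finset.mul_sum, hinv, mul_zero]
  exact absurd this (by positivity)

end Statement13Aux2
section Statement13Aux3

open Finset

/-- dual vectors supported below `A` -/
def Vfin (m s : ℕ) (C : Fin s → Matrix (Fin m) (Fin m) (ZMod 2)) (A : Fin s → ℕ) :
    Finset (Fin s → Fin m → ZMod 2) :=
  (dualNet m s C).filter (fun mm => ∀ i, rhoF (mm i) ≤ A i)

lemma Vfin_card {m s tm : ℕ} {C : Fin s → Matrix (Fin m) (Fin m) (ZMod 2)}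
    (hnet : IsNet tm m s (fun n : Fin (2 ^ m) => netPoint m s C (n : ℕ)))
    (htm : tm ≤ m) :
    ∀ (r : ℕ) (A : Fin s → ℕ), (∀ i, A i ≤ m) → ((∑ i, A i) = m - tm + r) →
      (Vfin m s C A).card ≤ 2 ^ r := by
  intro r
  induction r with
  | zero =>
    intro A hAm hsum
    have hsub : Vfin m s C A ⊆ {0} := by
      intro mm hmm
      rw [Finset.mem_singleton]
      by_contra hne
      rw [Vfin, Finset.mem_filter] at hmm
      exact net_vanish m s tm C hnet mm hmm.1 hne A hAm hmm.2 (by omega)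
    calc (Vfin m s C A).card ≤ ({0} : Finset (Fin s → Fin m → ZMod 2)).card :=
          Finset.card_le_card hsub
    _ ≤ 2 ^ 0 := by simp
  | succ r ih =>
    intro A hAm hsum
    obtain ⟨i0, hi0⟩ : ∃ i0, 1 ≤ A i0 := by
      by_contra hc
      push_neg at hc
      have h0 : (∑ i, A i) = 0 := Finset.sum_eq_zero (fun i _ => by have := hc i; omega)
      omega
    have hi0m : A i0 - 1 < m := by have := hAm i0; omega
    set j0 : Fin m := ⟨A i0 - 1, hi0m⟩ with hj0
    set A' : Fin s → ℕ := Function.update A i0 (A i0 - 1) with hA'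
    have hAsplit : (∑ i, A i) = A i0 + ∑ i ∈ Finset.univ.erase i0, A i :=
      (Finset.add_sum_erase _ A (Finset.mem_univ i0)).symm
    have hsum' : (∑ i, A' i) = m - tm + r := by
      rw [hA', Finset.sum_update_of_mem (Finset.mem_univ i0), Finset.sdiff_singleton_eq_erase]
      omega
    have hA'm : ∀ i, A' i ≤ m := by
      intro i
      rw [hA']
      by_cases hi : i = i0
      · rw [hi, Function.update_self]; have := hAm i0; omega
      · rw [Function.update_of_ne hi]; exact hAm i
    set F := Vfin m s C A with hF
    clear_value F
    have hF0 : F.filter (fun mm => mm i0 j0 = 0) ⊆ Vfin m s C A' := by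
      intro mm hmm
      rw [Finset.mem_filter] at hmm
      obtain ⟨hmF, hz⟩ := hmm
      rw [hF, Vfin, Finset.mem_filter] at hmF
      rw [Vfin, Finset.mem_filter]
      refine ⟨hmF.1, fun i => ?_⟩
      rw [rhoF_le_iff]
      intro j hj
      have hval : (j0:ℕ) = A i0 - 1 := rfl
      by_cases hi : i = i0
      · rw [hA', hi, Function.update_self] at hj
        rcases Nat.eq_or_lt_of_le hj with he | hl
        · have hjj : j = j0 := Fin.ext (by omega)
          rw [hi, hjj]; exact hz
        · rw [hi]
          exact (rhoF_le_iff _ _).mp (hmF.2 i0) j (by omega)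
      · rw [hA', Function.update_of_ne hi] at hj
        exact (rhoF_le_iff _ _).mp (hmF.2 i) j hj
    have hcF0 : (F.filter (fun mm => mm i0 j0 = 0)).card ≤ 2 ^ r :=
      le_trans (Finset.card_le_card hF0) (ih A' hA'm hsum')
    have hcF1 : (F.filter (fun mm => ¬ mm i0 j0 = 0)).card
        ≤ (F.filter (fun mm => mm i0 j0 = 0)).card := by
      rcases Finset.eq_empty_or_nonempty (F.filter (fun mm => ¬ mm i0 j0 = 0)) with he | hne
      · rw [he]; simp
      · obtain ⟨g, hg⟩ := hne
        refine Finset.card_le_card_of_injOn (fun mm => mm + g) (fun mm hmm => ?_)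
          (fun a _ b _ hab => add_right_cancel hab)
        dsimp only
        rw [Finset.mem_coe] at hmm ⊢
        rw [Finset.mem_filter] at hmm hg ⊢
        have hmmF := hmm.1
        have hgF := hg.1
        rw [hF, Vfin, Finset.mem_filter] at hmmF hgF
        constructor
        · rw [hF, Vfin, Finset.mem_filter]
          refine ⟨dualNet_add hmmF.1 hgF.1, fun i => ?_⟩
          rw [rhoF_le_iff]
          intro j hj
          have e1 := (rhoF_le_iff _ _).mp (hmmF.2 i) j hj
          have e2 := (rhoF_le_iff _ _).mp (hgF.2 i) j hj
          show mm i j + g i j = 0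
          rw [e1, e2, add_zero]
        · show (mm + g) i0 j0 = 0
          have h2 : mm i0 j0 = 1 := zmod2_ne_zero hmm.2
          have h3 : g i0 j0 = 1 := zmod2_ne_zero hg.2
          show mm i0 j0 + g i0 j0 = 0
          rw [h2, h3]; rfl
    have hsub2 : F ⊆ (F.filter (fun mm => mm i0 j0 = 0)) ∪ (F.filter (fun mm => ¬ mm i0 j0 = 0)) := by
      intro x hx
      rw [Finset.mem_union, Finset.mem_filter, Finset.mem_filter]
      by_cases hx0 : x i0 j0 = 0
      · exact Or.inl ⟨hx, hx0⟩
      · exact Or.inr ⟨hx, hx0⟩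
    have hcard := (Finset.card_le_card hsub2).trans (Finset.card_union_le _ _)
    have h2r : 2 ^ (r + 1) = 2 ^ r + 2 ^ r := by ring
    rw [h2r]
    exact le_trans hcard (add_le_add hcF0 (le_trans hcF1 hcF0))

lemma abs_rademF_eq_one {m s : ℕ} (A : Fin s → ℕ) (y : Fin s → Fin m → Fin 2) :
    |rademF A y| = 1 := by
  rw [rademF, Finset.abs_prod]
  apply Finset.prod_eq_one
  intro i _
  rw [abs_pow, abs_neg, abs_one, one_pow]

lemma abs_LamF_le {m s : ℕ} (C : Fin s → Matrix (Fin m) (Fin m) (ZMod 2)) (A : Fin s → ℕ)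
    (t y : Fin s → Fin m → Fin 2) :
    |LamF m s C A t y| ≤ ((Vfin m s C A).card : ℝ) := by
  rw [LamF]
  calc |∑ mm ∈ (dualNet m s C).filter fun mm => mm ≠ 0 ∧ ∀ i, rhoF (mm i) ≤ A i,
      (-1 : ℝ) ^ (∑ i, ((∑ j, (mm i j).val * ((t i j : ℕ) + (y i j : ℕ))) + mAt (mm i) (A i)))|
      ≤ ∑ mm ∈ (dualNet m s C).filter fun mm => mm ≠ 0 ∧ ∀ i, rhoF (mm i) ≤ A i,
        |(-1 : ℝ) ^ (∑ i, ((∑ j, (mm i j).val * ((t i j : ℕ) + (y i j : ℕ))) + mAt (mm i) (A i)))| :=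
      Finset.abs_sum_le_sum_abs _ _
  _ = ∑ mm ∈ (dualNet m s C).filter fun mm => mm ≠ 0 ∧ ∀ i, rhoF (mm i) ≤ A i, (1:ℝ) := by
      apply Finset.sum_congr rfl
      intro mm _
      rw [abs_pow, abs_neg, abs_one, one_pow]
  _ = (((dualNet m s C).filter fun mm => mm ≠ 0 ∧ ∀ i, rhoF (mm i) ≤ A i).card : ℝ) := by
      rw [Finset.sum_const, nsmul_eq_mul, mul_one]
  _ ≤ ((Vfin m s C A).card : ℝ) := by
      have hsub : ((dualNet m s C).filter fun mm => mm ≠ 0 ∧ ∀ i, rhoF (mm i) ≤ A i)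
          ⊆ Vfin m s C A := by
        intro x hx
        rw [Finset.mem_filter] at hx
        rw [Vfin, Finset.mem_filter]
        exact ⟨hx.1, hx.2.2⟩
      exact_mod_cast Finset.card_le_card hsub

lemma abs_PsiF_le {m s tm : ℕ} {C : Fin s → Matrix (Fin m) (Fin m) (ZMod 2)}
    (hnet : IsNet tm m s (fun n : Fin (2 ^ m) => netPoint m s C (n : ℕ)))
    (htm : tm ≤ m) (A : Fin s → ℕ) (hAm : ∀ i, A i ≤ m) (hA0 : m - tm < a0F A)
    (t y : Fin s → Fin m → Fin 2) : |PsiF m s C A t y| ≤ (2:ℝ) ^ tm := by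
  set r : ℕ := a0F A - (m - tm) with hr
  have hsum : (∑ i, A i) = m - tm + r := by
    have : a0F A = ∑ i, A i := rfl
    omega
  have hcard := Vfin_card hnet htm r A hAm hsum
  rw [PsiF, abs_mul, abs_mul, abs_mul, abs_pow, abs_neg, abs_one, one_pow, one_mul,
    abs_rademF_eq_one, mul_one]
  have h2 : |(2:ℝ) ^ ((m:ℤ) - s - a0F A)| = (2:ℝ) ^ ((m:ℤ) - s - a0F A) :=
    abs_of_pos (by positivity)
  rw [h2]
  calc (2:ℝ) ^ ((m:ℤ) - s - a0F A) * |LamF m s C A t y|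
      ≤ (2:ℝ) ^ ((m:ℤ) - s - a0F A) * ((Vfin m s C A).card : ℝ) := by
        apply mul_le_mul_of_nonneg_left (abs_LamF_le C A t y) (by positivity)
  _ ≤ (2:ℝ) ^ ((m:ℤ) - s - a0F A) * (2:ℝ) ^ (r:ℕ) := by
        apply mul_le_mul_of_nonneg_left ?_ (by positivity)
        exact_mod_cast hcard
  _ = (2:ℝ) ^ ((m:ℤ) - s - a0F A + r) := by
        rw [← zpow_natCast (2:ℝ) r, ← zpow_add₀ (two_ne_zero)]
  _ ≤ (2:ℝ) ^ ((tm:ℤ)) := by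
        apply zpow_le_zpow_right₀ (by norm_num)
        have : (a0F A : ℤ) = (m:ℤ) - tm + r := by
          have h3 : a0F A = ∑ i, A i := rfl
          omega
        omega
  _ = (2:ℝ) ^ tm := by rw [zpow_natCast]

lemma card_digitSpace (m s : ℕ) :
    (Finset.univ : Finset (Fin s → Fin m → Fin 2)).card = 2 ^ (s * m) := by
  rw [Finset.card_univ]
  rw [Fintype.card_fun, Fintype.card_fun, Fintype.card_fin, Fintype.card_fin,
    Fintype.card_fin, ← pow_mul, mul_comm]

lemma abs_Em_le {m s : ℕ} (f : (Fin s → Fin m → Fin 2) → (Fin s → Fin m → Fin 2) → ℝ)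
    (Bd : ℝ) (hBd : ∀ t y, |f t y| ≤ Bd) : |Em m s f| ≤ Bd := by
  have h0 : 0 ≤ Bd := le_trans (abs_nonneg _) (hBd (fun _ _ => 0) (fun _ _ => 0))
  rw [Em, abs_mul]
  have h1 : |(2:ℝ) ^ (-(2 * s * m : ℤ))| = (2:ℝ) ^ (-(2 * s * m : ℤ)) :=
    abs_of_pos (by positivity)
  rw [h1]
  have h2 : |∑ t : Fin s → Fin m → Fin 2, ∑ y : Fin s → Fin m → Fin 2, f t y|
      ≤ (2:ℝ) ^ (2 * s * m) * Bd := by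
    calc |∑ t : Fin s → Fin m → Fin 2, ∑ y : Fin s → Fin m → Fin 2, f t y|
        ≤ ∑ t : Fin s → Fin m → Fin 2, |∑ y : Fin s → Fin m → Fin 2, f t y| :=
          Finset.abs_sum_le_sum_abs _ _
    _ ≤ ∑ _t : Fin s → Fin m → Fin 2, (2:ℝ) ^ (s * m) * Bd := by
          apply Finset.sum_le_sum
          intro t _
          calc |∑ y : Fin s → Fin m → Fin 2, f t y|
              ≤ ∑ y : Fin s → Fin m → Fin 2, |f t y| := Finset.abs_sum_le_sum_abs _ _
          _ ≤ ∑ _y : Fin s → Fin m → Fin 2, Bd := Finset.sum_le_sum (fun y _ => hBd t y)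
          _ = (2:ℝ) ^ (s * m) * Bd := by
              rw [Finset.sum_const, nsmul_eq_mul, card_digitSpace]
              push_cast
              ring
    _ = (2:ℝ) ^ (s * m) * ((2:ℝ) ^ (s * m) * Bd) := by
          rw [Finset.sum_const, nsmul_eq_mul, card_digitSpace]
          push_cast
          ring
    _ = (2:ℝ) ^ (2 * s * m) * Bd := by
          rw [← mul_assoc, ← pow_add]
          congr 2
          ring
  calc (2:ℝ) ^ (-(2 * s * m : ℤ)) * |∑ t : Fin s → Fin m → Fin 2, ∑ y : Fin s → Fin m → Fin 2, f t y|
      ≤ (2:ℝ) ^ (-(2 * s * m : ℤ)) * ((2:ℝ) ^ (2 * s * m) * Bd) :=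
        mul_le_mul_of_nonneg_left h2 (by positivity)
  _ = Bd := by
        rw [← mul_assoc, ← zpow_natCast (2:ℝ) (2 * s * m), ← zpow_add₀ (two_ne_zero)]
        push_cast
        simp

lemma EmCond_eq_Em {m s : ℕ} (k : ℕ)
    (f : (Fin s → Fin m → Fin 2) → (Fin s → Fin m → Fin 2) → ℝ)
    (t y : Fin s → Fin m → Fin 2) :
    EmCond m s k f t y = Em m s (fun t' y' => f (mergeDig k t t') (mergeDig k y y')) := rfl

lemma abs_ThetaF_le {m s : ℕ} {C : Fin s → Matrix (Fin m) (Fin m) (ZMod 2)}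
    (A1 A2 : Fin s → ℕ) (k : ℕ) (Bd : ℝ)
    (h1 : ∀ t y, |PsiF m s C A1 t y| ≤ Bd) (h2 : ∀ t y, |PsiF m s C A2 t y| ≤ Bd)
    (t y : Fin s → Fin m → Fin 2) : |ThetaF m s C A1 A2 k t y| ≤ 2 * Bd ^ 2 := by
  have hB : ∀ t' y', |PsiF m s C A1 t' y' * PsiF m s C A2 t' y'| ≤ Bd ^ 2 := by
    intro t' y'
    rw [abs_mul, sq]
    exact mul_le_mul (h1 t' y') (h2 t' y') (abs_nonneg _)
      (le_trans (abs_nonneg _) (h1 t' y'))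
  rw [ThetaF]
  calc |EmCond m s (k-1) (fun t' y' => PsiF m s C A1 t' y' * PsiF m s C A2 t' y') t y
      - Em m s fun t' y' => PsiF m s C A1 t' y' * PsiF m s C A2 t' y'|
      ≤ |EmCond m s (k-1) (fun t' y' => PsiF m s C A1 t' y' * PsiF m s C A2 t' y') t y|
        + |Em m s fun t' y' => PsiF m s C A1 t' y' * PsiF m s C A2 t' y'| := abs_sub _ _
  _ ≤ Bd ^ 2 + Bd ^ 2 := by
      apply add_le_add
      · rw [EmCond_eq_Em]
        exact abs_Em_le _ _ (fun t' y' => hB _ _)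
      · exact abs_Em_le _ _ hB
  _ = 2 * Bd ^ 2 := by ring

end Statement13Aux3
section Statement13Aux4

open Finset

def flipB : Fin 2 → Fin 2 := fun x => ⟨1 - (x:ℕ), by omega⟩

def flipD {m s : ℕ} (i0 : Fin s) (j0 : Fin m) (t : Fin s → Fin m → Fin 2) :
    Fin s → Fin m → Fin 2 :=
  fun i j => if i = i0 ∧ j = j0 then flipB (t i j) else t i j

lemma flipB_invol (x : Fin 2) : flipB (flipB x) = x := by
  apply Fin.ext
  show 1 - (1 - (x:ℕ)) = (x:ℕ)
  have := x.isLt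
  omega

lemma flipD_invol {m s : ℕ} (i0 : Fin s) (j0 : Fin m) (t : Fin s → Fin m → Fin 2) :
    flipD i0 j0 (flipD i0 j0 t) = t := by
  funext i j
  simp only [flipD]
  by_cases h : i = i0 ∧ j = j0
  · rw [if_pos h, if_pos h, flipB_invol]
  · rw [if_neg h, if_neg h]

lemma flipD_bij {m s : ℕ} (i0 : Fin s) (j0 : Fin m) :
    Function.Bijective (flipD i0 j0 : (Fin s → Fin m → Fin 2) → (Fin s → Fin m → Fin 2)) :=
  Function.Involutive.bijective (fun t => flipD_invol i0 j0 t)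

lemma sum_flipD {m s : ℕ} (i0 : Fin s) (j0 : Fin m)
    (f : (Fin s → Fin m → Fin 2) → ℝ) :
    ∑ t : Fin s → Fin m → Fin 2, f (flipD i0 j0 t) = ∑ t : Fin s → Fin m → Fin 2, f t :=
  Function.Bijective.sum_comp (flipD_bij i0 j0) f

lemma LamF_flip {m s : ℕ} (C : Fin s → Matrix (Fin m) (Fin m) (ZMod 2)) (A : Fin s → ℕ)
    (i0 : Fin s) (j0 : Fin m) (t y : Fin s → Fin m → Fin 2) :
    LamF m s C A (flipD i0 j0 t) (flipD i0 j0 y) = LamF m s C A t y := by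
  rw [LamF, LamF]
  apply Finset.sum_congr rfl
  intro mm _
  apply neg_one_pow_mod2
  rw [Finset.sum_nat_mod, Finset.sum_nat_mod Finset.univ 2
    (fun i => (∑ j, (mm i j).val * ((t i j : ℕ) + (y i j : ℕ))) + mAt (mm i) (A i))]
  congr 1
  apply Finset.sum_congr rfl
  intro i _
  have hsum : (∑ j, (mm i j).val * ((flipD i0 j0 t i j : ℕ) + (flipD i0 j0 y i j : ℕ))) % 2
      = (∑ j, (mm i j).val * ((t i j : ℕ) + (y i j : ℕ))) % 2 := by
    rw [Finset.sum_nat_mod, Finset.sum_nat_mod Finset.univ 2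
      (fun j => (mm i j).val * ((t i j : ℕ) + (y i j : ℕ)))]
    congr 1
    apply Finset.sum_congr rfl
    intro j _
    by_cases hij : i = i0 ∧ j = j0
    · simp only [flipD, if_pos hij]
      have h1 : (flipB (t i j) : ℕ) = 1 - (t i j : ℕ) := rfl
      have h2 : (flipB (y i j) : ℕ) = 1 - (y i j : ℕ) := rfl
      rw [h1, h2]
      have ht := (t i j).isLt
      have hy := (y i j).isLt
      have hmv : (mm i j).val < 2 := ZMod.val_lt (mm i j)
      rcases (by omega : (mm i j).val = 0 ∨ (mm i j).val = 1) with h | h <;> rw [h] <;>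
        simp <;> omega
    · simp only [flipD, if_neg hij]
  omega

lemma rademF_flip {m s : ℕ} (A : Fin s → ℕ) (i0 : Fin s) (j0 : Fin m)
    (y : Fin s → Fin m → Fin 2) :
    rademF A (flipD i0 j0 y) = (if A i0 = (j0:ℕ) + 1 then (-1:ℝ) else 1) * rademF A y := by
  rw [rademF, rademF]
  rw [← Finset.prod_erase_mul Finset.univ _ (Finset.mem_univ i0),
      ← Finset.prod_erase_mul Finset.univ
        (fun i => (-1 : ℝ) ^ dAt (y i) (A i)) (Finset.mem_univ i0)]
  have hothers : ∀ i, i ≠ i0 → flipD i0 j0 y i = y i := by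
    intro i hi
    funext j
    simp only [flipD]
    rw [if_neg (by tauto)]
  have hprod : (∏ i ∈ Finset.univ.erase i0, (-1:ℝ) ^ dAt (flipD i0 j0 y i) (A i))
      = ∏ i ∈ Finset.univ.erase i0, (-1:ℝ) ^ dAt (y i) (A i) := by
    apply Finset.prod_congr rfl
    intro i hi
    rw [hothers i (Finset.mem_erase.mp hi).1]
  rw [hprod]
  by_cases hA : A i0 = (j0:ℕ) + 1
  · rw [if_pos hA]
    have hrange : 1 ≤ A i0 ∧ A i0 ≤ m := ⟨by omega, by have := j0.isLt; omega⟩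
    have hidx : (⟨A i0 - 1, by omega⟩ : Fin m) = j0 := Fin.ext (by show A i0 - 1 = (j0:ℕ); omega)
    have hfl : flipD i0 j0 y i0 j0 = flipB (y i0 j0) := by
      simp [flipD]
    have hd1 : dAt (flipD i0 j0 y i0) (A i0) = (flipB (y i0 j0) : ℕ) := by
      rw [dAt, dif_pos hrange, hidx, hfl]
    have hd2 : dAt (y i0) (A i0) = ((y i0 j0 : ℕ)) := by
      rw [dAt, dif_pos hrange, hidx]
    rw [hd1, hd2]
    have hflip : (flipB (y i0 j0) : ℕ) = 1 - (y i0 j0 : ℕ) := rfl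
    have hy := (y i0 j0).isLt
    rcases (by omega : (y i0 j0 : ℕ) = 0 ∨ (y i0 j0 : ℕ) = 1) with h | h <;>
      rw [hflip, h] <;> norm_num <;> ring
  · rw [if_neg hA, one_mul]
    congr 1
    rw [dAt, dAt]
    by_cases hrange : 1 ≤ A i0 ∧ A i0 ≤ m
    · rw [dif_pos hrange, dif_pos hrange]
      congr 1
      simp only [flipD]
      rw [if_neg]
      intro hcon
      have : (⟨A i0 - 1, by omega⟩ : Fin m) = j0 := hcon.2
      have : A i0 - 1 = (j0:ℕ) := by rw [← this]
      omega
    · rw [dif_neg hrange, dif_neg hrange]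

lemma PsiF_flip {m s : ℕ} (C : Fin s → Matrix (Fin m) (Fin m) (ZMod 2)) (A : Fin s → ℕ)
    (i0 : Fin s) (j0 : Fin m) (t y : Fin s → Fin m → Fin 2) :
    PsiF m s C A (flipD i0 j0 t) (flipD i0 j0 y)
      = (if A i0 = (j0:ℕ) + 1 then (-1:ℝ) else 1) * PsiF m s C A t y := by
  rw [PsiF, PsiF, rademF_flip, LamF_flip]
  ring

lemma G_flip {m s : ℕ} (C : Fin s → Matrix (Fin m) (Fin m) (ZMod 2)) (A1 A2 : Fin s → ℕ)
    (i0 : Fin s) (j0 : Fin m) (t y : Fin s → Fin m → Fin 2) :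
    PsiF m s C A1 (flipD i0 j0 t) (flipD i0 j0 y)
      * PsiF m s C A2 (flipD i0 j0 t) (flipD i0 j0 y)
    = ((if A1 i0 = (j0:ℕ)+1 then (-1:ℝ) else 1) * (if A2 i0 = (j0:ℕ)+1 then (-1:ℝ) else 1))
      * (PsiF m s C A1 t y * PsiF m s C A2 t y) := by
  rw [PsiF_flip, PsiF_flip]
  ring

lemma Em_flip {m s : ℕ} (f : (Fin s → Fin m → Fin 2) → (Fin s → Fin m → Fin 2) → ℝ)
    (i0 : Fin s) (j0 : Fin m) :
    Em m s (fun t y => f (flipD i0 j0 t) (flipD i0 j0 y)) = Em m s f := by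
  rw [Em, Em]
  congr 1
  calc ∑ t : Fin s → Fin m → Fin 2, ∑ y : Fin s → Fin m → Fin 2, f (flipD i0 j0 t) (flipD i0 j0 y)
      = ∑ t : Fin s → Fin m → Fin 2, ∑ y : Fin s → Fin m → Fin 2, f (flipD i0 j0 t) y := by
        apply Finset.sum_congr rfl
        intro t _
        exact sum_flipD i0 j0 (f (flipD i0 j0 t))
  _ = ∑ t : Fin s → Fin m → Fin 2, ∑ y : Fin s → Fin m → Fin 2, f t y :=
        sum_flipD i0 j0 (fun t => ∑ y : Fin s → Fin m → Fin 2, f t y)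

lemma Em_smul {m s : ℕ} (c : ℝ) (f : (Fin s → Fin m → Fin 2) → (Fin s → Fin m → Fin 2) → ℝ) :
    Em m s (fun t y => c * f t y) = c * Em m s f := by
  rw [Em, Em]
  have h : ∑ t : Fin s → Fin m → Fin 2, ∑ y : Fin s → Fin m → Fin 2, c * f t y
      = c * ∑ t : Fin s → Fin m → Fin 2, ∑ y : Fin s → Fin m → Fin 2, f t y := by
    rw [Finset.mul_sum]
    apply Finset.sum_congr rfl
    intro t _
    rw [Finset.mul_sum]
  rw [h]
  ring

lemma merge_flip_low {m s : ℕ} (k : ℕ) (i0 : Fin s) (j0 : Fin m) (h : (j0:ℕ) < k)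
    (t t' : Fin s → Fin m → Fin 2) :
    mergeDig k (flipD i0 j0 t) t' = flipD i0 j0 (mergeDig k t t') := by
  funext i j
  simp only [mergeDig, flipD]
  by_cases hij : i = i0 ∧ j = j0
  · have hjk : (j:ℕ) < k := by obtain ⟨_, hj⟩ := hij; rw [hj]; exact h
    simp only [if_pos hij, if_pos hjk]
  · simp only [if_neg hij]

lemma merge_flip_high {m s : ℕ} (k : ℕ) (i0 : Fin s) (j0 : Fin m) (h : k ≤ (j0:ℕ))
    (t t' : Fin s → Fin m → Fin 2) :
    mergeDig k t (flipD i0 j0 t') = flipD i0 j0 (mergeDig k t t') := by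
  funext i j
  simp only [mergeDig, flipD]
  by_cases hij : i = i0 ∧ j = j0
  · have hjk : ¬ (j:ℕ) < k := by obtain ⟨_, hj⟩ := hij; rw [hj]; omega
    simp only [if_pos hij, if_neg hjk]
  · simp only [if_neg hij]

lemma merge_flip_ignore {m s : ℕ} (k : ℕ) (i0 : Fin s) (j0 : Fin m) (h : k ≤ (j0:ℕ))
    (t t' : Fin s → Fin m → Fin 2) :
    mergeDig k (flipD i0 j0 t) t' = mergeDig k t t' := by
  funext i j
  simp only [mergeDig, flipD]
  by_cases hjk : (j:ℕ) < k
  · simp only [if_pos hjk]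
    rw [if_neg]
    intro hij
    obtain ⟨_, hj⟩ := hij
    rw [hj] at hjk
    omega
  · simp only [if_neg hjk]

lemma self_eq_neg_zero {a : ℝ} (h : a = -a) : a = 0 := by linarith

lemma sum2_smul {m s : ℕ} (c : ℝ)
    (g : (Fin s → Fin m → Fin 2) → (Fin s → Fin m → Fin 2) → ℝ) :
    ∑ t : Fin s → Fin m → Fin 2, ∑ y : Fin s → Fin m → Fin 2, c * g t y
      = c * ∑ t : Fin s → Fin m → Fin 2, ∑ y : Fin s → Fin m → Fin 2, g t y := by
  rw [Finset.mul_sum]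
  apply Finset.sum_congr rfl
  intro t _
  rw [Finset.mul_sum]

lemma EmG_scale {m s : ℕ} (C : Fin s → Matrix (Fin m) (Fin m) (ZMod 2))
    (A1 A2 : Fin s → ℕ) (i0 : Fin s) (j0 : Fin m) :
    Em m s (fun t' y' => PsiF m s C A1 t' y' * PsiF m s C A2 t' y')
      = ((if A1 i0 = (j0:ℕ)+1 then (-1:ℝ) else 1) * (if A2 i0 = (j0:ℕ)+1 then (-1:ℝ) else 1))
        * Em m s (fun t' y' => PsiF m s C A1 t' y' * PsiF m s C A2 t' y') := by
  conv_lhs => rw [← Em_flip (fun t' y' => PsiF m s C A1 t' y' * PsiF m s C A2 t' y') i0 j0]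
  rw [show (fun t' y' => PsiF m s C A1 (flipD i0 j0 t') (flipD i0 j0 y')
        * PsiF m s C A2 (flipD i0 j0 t') (flipD i0 j0 y'))
      = fun t' y' => ((if A1 i0 = (j0:ℕ)+1 then (-1:ℝ) else 1)
          * (if A2 i0 = (j0:ℕ)+1 then (-1:ℝ) else 1))
        * (PsiF m s C A1 t' y' * PsiF m s C A2 t' y')
      from funext fun t' => funext fun y' => G_flip C A1 A2 i0 j0 t' y']
  rw [Em_smul]

lemma sum2_flipD {m s : ℕ} (i0 : Fin s) (j0 : Fin m)
    (g : (Fin s → Fin m → Fin 2) → (Fin s → Fin m → Fin 2) → ℝ) :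
    ∑ t : Fin s → Fin m → Fin 2, ∑ y : Fin s → Fin m → Fin 2, g (flipD i0 j0 t) (flipD i0 j0 y)
      = ∑ t : Fin s → Fin m → Fin 2, ∑ y : Fin s → Fin m → Fin 2, g t y := by
  calc ∑ t : Fin s → Fin m → Fin 2, ∑ y : Fin s → Fin m → Fin 2, g (flipD i0 j0 t) (flipD i0 j0 y)
      = ∑ t : Fin s → Fin m → Fin 2, ∑ y : Fin s → Fin m → Fin 2, g (flipD i0 j0 t) y := by
        apply Finset.sum_congr rfl
        intro t _
        exact sum_flipD i0 j0 (g (flipD i0 j0 t))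
  _ = ∑ t : Fin s → Fin m → Fin 2, ∑ y : Fin s → Fin m → Fin 2, g t y :=
        sum_flipD i0 j0 (fun t => ∑ y : Fin s → Fin m → Fin 2, g t y)

lemma EmCond_scale_high {m s : ℕ} (C : Fin s → Matrix (Fin m) (Fin m) (ZMod 2))
    (A1 A2 : Fin s → ℕ) (k : ℕ) (i0 : Fin s) (j0 : Fin m) (h : k ≤ (j0:ℕ))
    (t y : Fin s → Fin m → Fin 2) :
    EmCond m s k (fun t' y' => PsiF m s C A1 t' y' * PsiF m s C A2 t' y') t y
      = ((if A1 i0 = (j0:ℕ)+1 then (-1:ℝ) else 1) * (if A2 i0 = (j0:ℕ)+1 then (-1:ℝ) else 1))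
        * EmCond m s k (fun t' y' => PsiF m s C A1 t' y' * PsiF m s C A2 t' y') t y := by
  simp only [EmCond]
  have hre : ∑ t' : Fin s → Fin m → Fin 2, ∑ y' : Fin s → Fin m → Fin 2,
        PsiF m s C A1 (mergeDig k t t') (mergeDig k y y')
          * PsiF m s C A2 (mergeDig k t t') (mergeDig k y y')
      = ∑ t' : Fin s → Fin m → Fin 2, ∑ y' : Fin s → Fin m → Fin 2,
        ((if A1 i0 = (j0:ℕ)+1 then (-1:ℝ) else 1)
          * (if A2 i0 = (j0:ℕ)+1 then (-1:ℝ) else 1))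
        * (PsiF m s C A1 (mergeDig k t t') (mergeDig k y y')
          * PsiF m s C A2 (mergeDig k t t') (mergeDig k y y')) := by
    calc ∑ t' : Fin s → Fin m → Fin 2, ∑ y' : Fin s → Fin m → Fin 2,
        PsiF m s C A1 (mergeDig k t t') (mergeDig k y y')
          * PsiF m s C A2 (mergeDig k t t') (mergeDig k y y')
        = ∑ t' : Fin s → Fin m → Fin 2, ∑ y' : Fin s → Fin m → Fin 2,
          PsiF m s C A1 (mergeDig k t (flipD i0 j0 t')) (mergeDig k y (flipD i0 j0 y'))
            * PsiF m s C A2 (mergeDig k t (flipD i0 j0 t')) (mergeDig k y (flipD i0 j0 y')) :=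
          (sum2_flipD i0 j0 (fun a b =>
            PsiF m s C A1 (mergeDig k t a) (mergeDig k y b)
              * PsiF m s C A2 (mergeDig k t a) (mergeDig k y b))).symm
    _ = ∑ t' : Fin s → Fin m → Fin 2, ∑ y' : Fin s → Fin m → Fin 2,
          ((if A1 i0 = (j0:ℕ)+1 then (-1:ℝ) else 1)
            * (if A2 i0 = (j0:ℕ)+1 then (-1:ℝ) else 1))
          * (PsiF m s C A1 (mergeDig k t t') (mergeDig k y y')
            * PsiF m s C A2 (mergeDig k t t') (mergeDig k y y')) := by
          apply Finset.sum_congr rfl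
          intro t' _
          apply Finset.sum_congr rfl
          intro y' _
          rw [merge_flip_high k i0 j0 h, merge_flip_high k i0 j0 h, G_flip]
  conv_lhs => rw [hre]
  rw [sum2_smul]
  ring

lemma EmCond_scale_low {m s : ℕ} (C : Fin s → Matrix (Fin m) (Fin m) (ZMod 2))
    (A1 A2 : Fin s → ℕ) (k : ℕ) (i0 : Fin s) (j0 : Fin m) (h : (j0:ℕ) < k)
    (t y : Fin s → Fin m → Fin 2) :
    EmCond m s k (fun t' y' => PsiF m s C A1 t' y' * PsiF m s C A2 t' y')
        (flipD i0 j0 t) (flipD i0 j0 y)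
      = ((if A1 i0 = (j0:ℕ)+1 then (-1:ℝ) else 1) * (if A2 i0 = (j0:ℕ)+1 then (-1:ℝ) else 1))
        * EmCond m s k (fun t' y' => PsiF m s C A1 t' y' * PsiF m s C A2 t' y') t y := by
  simp only [EmCond]
  have hre : ∑ t' : Fin s → Fin m → Fin 2, ∑ y' : Fin s → Fin m → Fin 2,
        PsiF m s C A1 (mergeDig k (flipD i0 j0 t) t') (mergeDig k (flipD i0 j0 y) y')
          * PsiF m s C A2 (mergeDig k (flipD i0 j0 t) t') (mergeDig k (flipD i0 j0 y) y')
      = ∑ t' : Fin s → Fin m → Fin 2, ∑ y' : Fin s → Fin m → Fin 2,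
        ((if A1 i0 = (j0:ℕ)+1 then (-1:ℝ) else 1)
          * (if A2 i0 = (j0:ℕ)+1 then (-1:ℝ) else 1))
        * (PsiF m s C A1 (mergeDig k t t') (mergeDig k y y')
          * PsiF m s C A2 (mergeDig k t t') (mergeDig k y y')) := by
    apply Finset.sum_congr rfl
    intro t' _
    apply Finset.sum_congr rfl
    intro y' _
    rw [merge_flip_low k i0 j0 h, merge_flip_low k i0 j0 h, G_flip]
  conv_lhs => rw [hre]
  rw [sum2_smul]
  ring

lemma theta_flip {m s : ℕ} (C : Fin s → Matrix (Fin m) (Fin m) (ZMod 2))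
    (A1 A2 : Fin s → ℕ) (k : ℕ) (i0 : Fin s) (j0 : Fin m)
    (t y : Fin s → Fin m → Fin 2) :
    ThetaF m s C A1 A2 k (flipD i0 j0 t) (flipD i0 j0 y)
      = (if (j0:ℕ) + 1 < k then
          (if A1 i0 = (j0:ℕ)+1 then (-1:ℝ) else 1) * (if A2 i0 = (j0:ℕ)+1 then (-1:ℝ) else 1)
        else 1) * ThetaF m s C A1 A2 k t y := by
  have hσ2 : ((if A1 i0 = (j0:ℕ)+1 then (-1:ℝ) else 1)
      * (if A2 i0 = (j0:ℕ)+1 then (-1:ℝ) else 1))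
      * ((if A1 i0 = (j0:ℕ)+1 then (-1:ℝ) else 1)
      * (if A2 i0 = (j0:ℕ)+1 then (-1:ℝ) else 1)) = 1 := by
    by_cases h1 : A1 i0 = (j0:ℕ)+1 <;> by_cases h2 : A2 i0 = (j0:ℕ)+1 <;>
      simp [h1, h2]
  by_cases hlow : (j0:ℕ) + 1 < k
  · rw [if_pos hlow, ThetaF, ThetaF]
    rw [EmCond_scale_low C A1 A2 (k-1) i0 j0 (by omega) t y]
    have h3 : ((if A1 i0 = (j0:ℕ)+1 then (-1:ℝ) else 1)
        * (if A2 i0 = (j0:ℕ)+1 then (-1:ℝ) else 1))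
        * Em m s (fun t' y' => PsiF m s C A1 t' y' * PsiF m s C A2 t' y')
        = Em m s (fun t' y' => PsiF m s C A1 t' y' * PsiF m s C A2 t' y') := by
      conv_rhs => rw [EmG_scale C A1 A2 i0 j0]
    conv_rhs => rw [mul_sub, h3]
  · rw [if_neg hlow, one_mul, ThetaF, ThetaF]
    congr 1
    rw [EmCond, EmCond]
    congr 1
    apply Finset.sum_congr rfl
    intro t' _
    apply Finset.sum_congr rfl
    intro y' _
    rw [merge_flip_ignore (k-1) i0 j0 (by omega), merge_flip_ignore (k-1) i0 j0 (by omega)]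

lemma theta_zero {m s : ℕ} (C : Fin s → Matrix (Fin m) (Fin m) (ZMod 2))
    (A1 A2 : Fin s → ℕ) (k : ℕ) (hk1 : 1 ≤ k) (hkm : k ≤ m) (i0 : Fin s)
    (hmix : ¬ ((A1 i0 = k) ↔ (A2 i0 = k))) (t y : Fin s → Fin m → Fin 2) :
    ThetaF m s C A1 A2 k t y = 0 := by
  have hj0m : k - 1 < m := by omega
  have hjk : (((⟨k-1, hj0m⟩ : Fin m) : ℕ)) + 1 = k := by
    show k - 1 + 1 = k
    omega
  have hsign : ((if A1 i0 = ((⟨k-1, hj0m⟩ : Fin m):ℕ)+1 then (-1:ℝ) else 1)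
      * (if A2 i0 = ((⟨k-1, hj0m⟩ : Fin m):ℕ)+1 then (-1:ℝ) else 1)) = -1 := by
    rw [hjk]
    by_cases h1 : A1 i0 = k <;> by_cases h2 : A2 i0 = k
    · exact absurd (iff_of_true h1 h2) hmix
    · rw [if_pos h1, if_neg h2]; ring
    · rw [if_neg h1, if_pos h2]; ring
    · exact absurd (iff_of_false h1 h2) hmix
  rw [ThetaF]
  have h1 : EmCond m s (k-1)
      (fun t' y' => PsiF m s C A1 t' y' * PsiF m s C A2 t' y') t y = 0 := by
    apply self_eq_neg_zero
    nth_rewrite 1 [EmCond_scale_high C A1 A2 (k-1) i0 ⟨k-1, hj0m⟩ (le_refl _) t y]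
    rw [hsign]
    ring
  have h2 : Em m s (fun t' y' => PsiF m s C A1 t' y' * PsiF m s C A2 t' y') = 0 := by
    apply self_eq_neg_zero
    nth_rewrite 1 [EmG_scale C A1 A2 i0 ⟨k-1, hj0m⟩]
    rw [hsign]
    ring
  rw [h1, h2, sub_zero]

lemma em_theta_theta_zero {m s : ℕ} (C : Fin s → Matrix (Fin m) (Fin m) (ZMod 2))
    (A1 A2 A3 A4 : Fin s → ℕ) (k1 k2 : ℕ) (i0 : Fin s) (j0 : Fin m)
    (hsign : (if (j0:ℕ)+1 < k1 then
        (if A1 i0 = (j0:ℕ)+1 then (-1:ℝ) else 1) * (if A2 i0 = (j0:ℕ)+1 then (-1:ℝ) else 1)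
      else 1)
      * (if (j0:ℕ)+1 < k2 then
        (if A3 i0 = (j0:ℕ)+1 then (-1:ℝ) else 1) * (if A4 i0 = (j0:ℕ)+1 then (-1:ℝ) else 1)
      else 1) = -1) :
    Em m s (fun t y => ThetaF m s C A1 A2 k1 t y * ThetaF m s C A3 A4 k2 t y) = 0 := by
  apply self_eq_neg_zero
  conv_lhs => rw [← Em_flip (fun t y => ThetaF m s C A1 A2 k1 t y * ThetaF m s C A3 A4 k2 t y)
    i0 j0]
  rw [show (fun t y => ThetaF m s C A1 A2 k1 (flipD i0 j0 t) (flipD i0 j0 y)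
        * ThetaF m s C A3 A4 k2 (flipD i0 j0 t) (flipD i0 j0 y))
      = fun t y => ((if (j0:ℕ)+1 < k1 then
          (if A1 i0 = (j0:ℕ)+1 then (-1:ℝ) else 1) * (if A2 i0 = (j0:ℕ)+1 then (-1:ℝ) else 1)
        else 1)
        * (if (j0:ℕ)+1 < k2 then
          (if A3 i0 = (j0:ℕ)+1 then (-1:ℝ) else 1) * (if A4 i0 = (j0:ℕ)+1 then (-1:ℝ) else 1)
        else 1))
        * (ThetaF m s C A1 A2 k1 t y * ThetaF m s C A3 A4 k2 t y)
      from funext fun t => funext fun y => by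
        rw [theta_flip C A1 A2 k1 i0 j0 t y, theta_flip C A3 A4 k2 i0 j0 t y]; ring]
  rw [Em_smul, hsign]
  ring

end Statement13Aux4
section Statement13Aux5

lemma sign_of_odd (p1 p2 p3 p4 q1 q2 : Prop) [Decidable p1] [Decidable p2] [Decidable p3]
    [Decidable p4] [Decidable q1] [Decidable q2]
    (h : ((if q1 then ((if p1 then 1 else 0) + (if p2 then 1 else 0)) else 0)
        + (if q2 then ((if p3 then 1 else 0) + (if p4 then 1 else 0)) else 0)) % 2 = 1) :
    (if q1 then (if p1 then (-1:ℝ) else 1) * (if p2 then (-1:ℝ) else 1) else 1)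
      * (if q2 then (if p3 then (-1:ℝ) else 1) * (if p4 then (-1:ℝ) else 1) else 1) = -1 := by
  split_ifs at h ⊢ <;> norm_num at h ⊢

lemma coord_det {m k1 k2 a1 a2 a3 a4 : ℕ}
    (h1m : a1 ≤ m) (h2m : a2 ≤ m) (h3m : a3 ≤ m) (h4m : a4 ≤ m)
    (h2k : a2 ≤ k1) (h4k : a4 ≤ k2)
    (h12 : a1 < a2) (h34 : a3 < a4)
    (g1 : (a1 = k1) ↔ (a2 = k1)) (g2 : (a3 = k2) ↔ (a4 = k2))
    (g3 : ∀ v, 1 ≤ v → v ≤ m →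
      ((if v < k1 then ((if a1 = v then 1 else 0) + (if a2 = v then 1 else 0)) else 0)
        + (if v < k2 then ((if a3 = v then 1 else 0) + (if a4 = v then 1 else 0)) else 0)) % 2
        = 0) :
    a3 = a1 ∧ a4 = a2 := by
  have h2k1 : a2 < k1 := by
    rcases Nat.lt_or_ge a2 k1 with h | h
    · exact h
    · have he : a2 = k1 := by omega
      have := g1.mpr he
      omega
  have h4k2 : a4 < k2 := by
    rcases Nat.lt_or_ge a4 k2 with h | h
    · exact h
    · have he : a4 = k2 := by omega
      have := g2.mpr he
      omega
  -- fact from v = a2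
  have f2 : a2 < k2 ∧ ((a3 = a2 ∧ ¬ a4 = a2) ∨ (a4 = a2 ∧ ¬ a3 = a2)) := by
    have hv := g3 a2 (by omega) h2m
    rw [if_pos h2k1, if_neg (show ¬ a1 = a2 by omega), if_pos rfl] at hv
    split_ifs at hv <;> omega
  -- fact from v = a4
  have f4 : a4 < k1 ∧ ((a1 = a4 ∧ ¬ a2 = a4) ∨ (a2 = a4 ∧ ¬ a1 = a4)) := by
    have hv := g3 a4 (by omega) h4m
    rw [if_pos h4k2, if_neg (show ¬ a3 = a4 by omega), if_pos rfl] at hv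
    split_ifs at hv <;> omega
  by_cases h1z : 1 ≤ a1
  · -- fact from v = a1
    have f1 : a1 < k2 ∧ ((a3 = a1 ∧ ¬ a4 = a1) ∨ (a4 = a1 ∧ ¬ a3 = a1)) := by
      have hv := g3 a1 h1z h1m
      rw [if_pos (by omega), if_pos rfl, if_neg (show ¬ a2 = a1 by omega)] at hv
      split_ifs at hv <;> omega
    omega
  · by_cases h3z : 1 ≤ a3
    · have f3 : a3 < k1 ∧ ((a1 = a3 ∧ ¬ a2 = a3) ∨ (a2 = a3 ∧ ¬ a1 = a3)) := by
        have hv := g3 a3 h3z h3m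
        rw [if_pos (by omega), if_pos rfl, if_neg (show ¬ a4 = a3 by omega)] at hv
        split_ifs at hv <;> omega
      omega
    · omega

end Statement13Aux5
section Statement13Aux6

open Finset

lemma eq_at_of_sum_eq {s : ℕ} (f g : Fin s → ℕ) (i0 : Fin s)
    (hoff : ∀ j, j ≠ i0 → f j = g j) (hsum : ∑ j, f j = ∑ j, g j) : f i0 = g i0 := by
  have h1 : ∑ j, f j = f i0 + ∑ j ∈ Finset.univ.erase i0, f j :=
    (Finset.add_sum_erase _ f (Finset.mem_univ i0)).symm
  have h2 : ∑ j, g j = g i0 + ∑ j ∈ Finset.univ.erase i0, g j :=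
    (Finset.add_sum_erase _ g (Finset.mem_univ i0)).symm
  have h3 : ∑ j ∈ Finset.univ.erase i0, f j = ∑ j ∈ Finset.univ.erase i0, g j :=
    Finset.sum_congr rfl (fun j hj => hoff j (Finset.mem_erase.mp hj).1)
  omega

lemma card_maskPi (s m : ℕ) (P : Fin s → Prop) [DecidablePred P] :
    (Fintype.piFinset (fun i : Fin s =>
      if P i then ({0} : Finset ℕ) else Finset.range (m+1))).card
      = (m+1) ^ (Finset.univ.filter (fun i => ¬ P i)).card := by
  rw [Fintype.card_piFinset]
  rw [← Finset.prod_filter_mul_prod_filter_not Finset.univ P]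
  have h1 : ∏ i ∈ Finset.univ.filter P,
      (if P i then ({0}:Finset ℕ) else Finset.range (m+1)).card = 1 :=
    Finset.prod_eq_one (fun i hi => by rw [if_pos (Finset.mem_filter.mp hi).2]; simp)
  have h2 : ∏ i ∈ Finset.univ.filter (fun i => ¬ P i),
      (if P i then ({0}:Finset ℕ) else Finset.range (m+1)).card
      = (m+1) ^ (Finset.univ.filter (fun i => ¬ P i)).card := by
    rw [Finset.prod_congr rfl (fun i hi => by
      rw [if_neg (Finset.mem_filter.mp hi).2, Finset.card_range])]
    rw [Finset.prod_const]
  rw [h1, h2, one_mul]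

lemma count_main {s m tm k1 : ℕ} (hs : 2 ≤ s)
    (J1 : Finset (Fin s)) (hJ1ne : J1.Nonempty) (hJ1c : J1.card < s)
    (Q : Finset (((Fin s → ℕ) × (Fin s → ℕ)) × ((Fin s → ℕ) × (Fin s → ℕ))))
    (hmem : ∀ q ∈ Q,
      (∀ i, q.1.1 i ≤ m) ∧ (∀ i, q.1.2 i ≤ m) ∧ (∀ i, q.2.1 i ≤ m) ∧
      (∃ i, q.1.1 i = k1) ∧
      (∀ i, i ∈ J1 → q.1.2 i = q.1.1 i) ∧
      (∀ i, i ∈ J1 → q.2.2 i = q.2.1 i) ∧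
      (∀ i, i ∉ J1 → q.2.1 i = q.1.1 i) ∧
      (∀ i, i ∉ J1 → q.2.2 i = q.1.2 i) ∧
      a0F q.1.1 ∈ Finset.Ioc (m - tm) (m + ⌈V0 m⌉₊) ∧
      a0F q.1.2 ∈ Finset.Ioc (m - tm) (m + ⌈V0 m⌉₊) ∧
      a0F q.2.1 ∈ Finset.Ioc (m - tm) (m + ⌈V0 m⌉₊)) :
    Q.card ≤ s * ((m+1) ^ (s-2) * (((m + ⌈V0 m⌉₊) - (m - tm)) *
      ((m+1) ^ (s - J1.card - 1) * (((m + ⌈V0 m⌉₊) - (m - tm)) *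
      ((m+1) ^ (J1.card - 1) * ((m + ⌈V0 m⌉₊) - (m - tm))))))) := by
  classical
  have hcover : Q ⊆ Finset.univ.biUnion (fun i0 => Q.filter (fun q => q.1.1 i0 = k1)) := by
    intro q hq
    obtain ⟨i0, hi0⟩ := (hmem q hq).2.2.2.1
    exact Finset.mem_biUnion.mpr ⟨i0, Finset.mem_univ _, Finset.mem_filter.mpr ⟨hq, hi0⟩⟩
  have hper : ∀ i0 : Fin s, (Q.filter (fun q => q.1.1 i0 = k1)).card
      ≤ (m+1) ^ (s-2) * (((m + ⌈V0 m⌉₊) - (m - tm)) *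
        ((m+1) ^ (s - J1.card - 1) * (((m + ⌈V0 m⌉₊) - (m - tm)) *
        ((m+1) ^ (J1.card - 1) * ((m + ⌈V0 m⌉₊) - (m - tm)))))) := by
    intro i0
    have hs1 : 0 < s := by omega
    have hs2 : 1 < s := by omega
    set iw1 : Fin s := if i0 = ⟨0, hs1⟩ then ⟨1, hs2⟩ else ⟨0, hs1⟩ with hiw1
    have hiw1ne : iw1 ≠ i0 := by
      rw [hiw1]
      split_ifs with h
      · rw [h]
        intro hc
        have := congrArg Fin.val hc
        simp at this
      · intro hc
        exact h hc.symm
    obtain ⟨iw2, hiw2⟩ : ∃ i, i ∉ J1 := by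
      by_contra hc
      push_neg at hc
      have he : J1 = Finset.univ := Finset.eq_univ_iff_forall.mpr hc
      rw [he, Finset.card_univ, Fintype.card_fin] at hJ1c
      omega
    obtain ⟨iw3, hiw3⟩ := hJ1ne
    -- the injection
    have hinj := Finset.card_le_card_of_injOn
      (f := fun q : ((Fin s → ℕ) × (Fin s → ℕ)) × ((Fin s → ℕ) × (Fin s → ℕ)) =>
        ((fun i => if i = i0 ∨ i = iw1 then 0 else q.1.1 i),
          (a0F q.1.1,
          ((fun i => if i ∈ J1 ∨ i = iw2 then 0 else q.1.2 i),
          (a0F q.1.2,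
          ((fun i => if i ∉ J1 ∨ i = iw3 then 0 else q.2.1 i),
          a0F q.2.1))))))
      (s := Q.filter (fun q => q.1.1 i0 = k1))
      (t := (Fintype.piFinset (fun i : Fin s =>
          if i = i0 ∨ i = iw1 then ({0}:Finset ℕ) else Finset.range (m+1))) ×ˢ
        ((Finset.Ioc (m-tm) (m + ⌈V0 m⌉₊)) ×ˢ
        ((Fintype.piFinset (fun i : Fin s =>
          if i ∈ J1 ∨ i = iw2 then ({0}:Finset ℕ) else Finset.range (m+1))) ×ˢ
        ((Finset.Ioc (m-tm) (m + ⌈V0 m⌉₊)) ×ˢ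
        ((Fintype.piFinset (fun i : Fin s =>
          if i ∉ J1 ∨ i = iw3 then ({0}:Finset ℕ) else Finset.range (m+1))) ×ˢ
        (Finset.Ioc (m-tm) (m + ⌈V0 m⌉₊)))))))
      ?_ ?_
    · -- use hinj and compute the card of the target
      refine le_trans hinj (le_of_eq ?_)
      rw [Finset.card_product, Finset.card_product, Finset.card_product,
        Finset.card_product, Finset.card_product]
      rw [card_maskPi, card_maskPi, card_maskPi, Nat.card_Ioc]
      congr 2
      · -- exponent s - 2
        congr 1
        have he : Finset.univ.filter (fun i : Fin s => ¬(i = i0 ∨ i = iw1))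
            = Finset.univ \ ({i0, iw1} : Finset (Fin s)) := by
          ext i
          simp [not_or]
        rw [he, Finset.card_sdiff_of_subset (Finset.subset_univ _), Finset.card_univ, Fintype.card_fin]
        have hc2 : ({i0, iw1} : Finset (Fin s)).card = 2 := by
          rw [Finset.card_insert_of_notMem (by
            rw [Finset.mem_singleton]
            exact fun h => hiw1ne h.symm), Finset.card_singleton]
        omega
      congr 2
      · congr 1
        have he : Finset.univ.filter (fun i : Fin s => ¬(i ∈ J1 ∨ i = iw2))
            = Finset.univ \ (insert iw2 J1) := by
          ext i
          simp [not_or]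
          tauto
        rw [he, Finset.card_sdiff_of_subset (Finset.subset_univ _), Finset.card_univ, Fintype.card_fin,
          Finset.card_insert_of_notMem hiw2]
        omega
      congr 2
      congr 1
      have he : Finset.univ.filter (fun i : Fin s => ¬(i ∉ J1 ∨ i = iw3)) = J1.erase iw3 := by
        ext i
        simp [not_or, Finset.mem_erase]
        tauto
      rw [he, Finset.card_erase_of_mem hiw3]
    · -- maps into target
      intro q hq
      rw [Finset.mem_coe, Finset.mem_filter] at hq
      obtain ⟨h11m, h12m, h21m, _, _, _, _, _, hW1, hW2, hW3⟩ := hmem q hq.1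
      rw [Finset.mem_coe, Finset.mem_product]
      constructor
      · rw [Fintype.mem_piFinset]
        intro i
        dsimp only
        by_cases hi : i = i0 ∨ i = iw1
        · rw [if_pos hi, if_pos hi]
          exact Finset.mem_singleton_self 0
        · rw [if_neg hi, if_neg hi, Finset.mem_range]
          have := h11m i
          omega
      rw [Finset.mem_product]
      refine ⟨hW1, ?_⟩
      rw [Finset.mem_product]
      constructor
      · rw [Fintype.mem_piFinset]
        intro i
        dsimp only
        by_cases hi : i ∈ J1 ∨ i = iw2
        · rw [if_pos hi, if_pos hi]
          exact Finset.mem_singleton_self 0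
        · rw [if_neg hi, if_neg hi, Finset.mem_range]
          have := h12m i
          omega
      rw [Finset.mem_product]
      refine ⟨hW2, ?_⟩
      rw [Finset.mem_product]
      constructor
      · rw [Fintype.mem_piFinset]
        intro i
        dsimp only
        by_cases hi : i ∉ J1 ∨ i = iw3
        · rw [if_pos hi, if_pos hi]
          exact Finset.mem_singleton_self 0
        · rw [if_neg hi, if_neg hi, Finset.mem_range]
          have := h21m i
          omega
      exact hW3
    · -- injectivity
      intro q hq q' hq' heq
      rw [Finset.coe_filter, Set.mem_setOf_eq] at hq hq'
      obtain ⟨hqQ, hqk⟩ := hq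
      obtain ⟨hq'Q, hq'k⟩ := hq'
      obtain ⟨_, _, _, _, hJ12, hJ34, hoff3, hoff4, _, _, _⟩ := hmem q hqQ
      obtain ⟨_, _, _, _, hJ12', hJ34', hoff3', hoff4', _, _, _⟩ := hmem q' hq'Q
      have e1 := congrArg (fun x : (Fin s → ℕ) ×
        (ℕ × ((Fin s → ℕ) × (ℕ × ((Fin s → ℕ) × ℕ)))) => x.1) heq
      have e2 := congrArg (fun x : (Fin s → ℕ) ×
        (ℕ × ((Fin s → ℕ) × (ℕ × ((Fin s → ℕ) × ℕ)))) => x.2.1) heq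
      have e3 := congrArg (fun x : (Fin s → ℕ) ×
        (ℕ × ((Fin s → ℕ) × (ℕ × ((Fin s → ℕ) × ℕ)))) => x.2.2.1) heq
      have e4 := congrArg (fun x : (Fin s → ℕ) ×
        (ℕ × ((Fin s → ℕ) × (ℕ × ((Fin s → ℕ) × ℕ)))) => x.2.2.2.1) heq
      have e5 := congrArg (fun x : (Fin s → ℕ) ×
        (ℕ × ((Fin s → ℕ) × (ℕ × ((Fin s → ℕ) × ℕ)))) => x.2.2.2.2.1) heq
      have e6 := congrArg (fun x : (Fin s → ℕ) ×
        (ℕ × ((Fin s → ℕ) × (ℕ × ((Fin s → ℕ) × ℕ)))) => x.2.2.2.2.2) heq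
      simp only at e1 e2 e3 e4 e5 e6
      have hA1off : ∀ i, i ≠ iw1 → q.1.1 i = q'.1.1 i := by
        intro i hi
        by_cases hii : i = i0
        · rw [hii, hqk, hq'k]
        · have h := congrFun e1 i
          rw [if_neg (by tauto), if_neg (by tauto)] at h
          exact h
      have hA1 : q.1.1 = q'.1.1 := by
        funext i
        by_cases hi : i = iw1
        · rw [hi]
          exact eq_at_of_sum_eq _ _ iw1 (fun j hj => hA1off j hj) e2
        · exact hA1off i hi
      have hA2off : ∀ i, i ≠ iw2 → q.1.2 i = q'.1.2 i := by
        intro i hi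
        by_cases hiJ : i ∈ J1
        · have u1 := hJ12 i hiJ
          have u2 := hJ12' i hiJ
          have u3 := congrFun hA1 i
          omega
        · have h := congrFun e3 i
          rw [if_neg (by tauto), if_neg (by tauto)] at h
          exact h
      have hA2 : q.1.2 = q'.1.2 := by
        funext i
        by_cases hi : i = iw2
        · rw [hi]
          exact eq_at_of_sum_eq _ _ iw2 (fun j hj => hA2off j hj) e4
        · exact hA2off i hi
      have hA3off : ∀ i, i ≠ iw3 → q.2.1 i = q'.2.1 i := by
        intro i hi
        by_cases hiJ : i ∈ J1
        · have h := congrFun e5 i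
          rw [if_neg (by tauto), if_neg (by tauto)] at h
          exact h
        · have u1 := hoff3 i hiJ
          have u2 := hoff3' i hiJ
          have u3 := congrFun hA1 i
          omega
      have hA3 : q.2.1 = q'.2.1 := by
        funext i
        by_cases hi : i = iw3
        · rw [hi]
          exact eq_at_of_sum_eq _ _ iw3 (fun j hj => hA3off j hj) e6
        · exact hA3off i hi
      have hA4 : q.2.2 = q'.2.2 := by
        funext i
        by_cases hiJ : i ∈ J1
        · have u1 := hJ34 i hiJ
          have u2 := hJ34' i hiJ
          have u3 := congrFun hA3 i
          omega
        · have u1 := hoff4 i hiJ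
          have u2 := hoff4' i hiJ
          have u3 := congrFun hA2 i
          omega
      exact Prod.ext (Prod.ext hA1 hA2) (Prod.ext hA3 hA4)
  calc Q.card ≤ (Finset.univ.biUnion (fun i0 => Q.filter (fun q => q.1.1 i0 = k1))).card :=
        Finset.card_le_card hcover
  _ ≤ ∑ i0 : Fin s, (Q.filter (fun q => q.1.1 i0 = k1)).card := Finset.card_biUnion_le
  _ ≤ ∑ _i0 : Fin s, ((m+1) ^ (s-2) * (((m + ⌈V0 m⌉₊) - (m - tm)) *
        ((m+1) ^ (s - J1.card - 1) * (((m + ⌈V0 m⌉₊) - (m - tm)) *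
        ((m+1) ^ (J1.card - 1) * ((m + ⌈V0 m⌉₊) - (m - tm))))))) :=
        Finset.sum_le_sum (fun i0 _ => hper i0)
  _ = s * ((m+1) ^ (s-2) * (((m + ⌈V0 m⌉₊) - (m - tm)) *
        ((m+1) ^ (s - J1.card - 1) * (((m + ⌈V0 m⌉₊) - (m - tm)) *
        ((m+1) ^ (J1.card - 1) * ((m + ⌈V0 m⌉₊) - (m - tm))))))) := by
      rw [Finset.sum_const, Finset.card_univ, Fintype.card_fin, smul_eq_mul]

end Statement13Aux6
section Statement13Aux7

set_option maxHeartbeats 2000000 in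
lemma numeric_final (s m tm d1 : ℕ) (hs : 2 ≤ s) (hm : 1 ≤ m)
    (hd1 : 1 ≤ d1) (hd1s : d1 < s) (htm10 : (tm:ℝ) ≤ Real.logb 2 m / 10) (htmm : tm ≤ m) :
    ((s * ((m+1) ^ (s-2) * (((m + ⌈V0 m⌉₊) - (m - tm)) *
      ((m+1) ^ (s - d1 - 1) * (((m + ⌈V0 m⌉₊) - (m - tm)) *
      ((m+1) ^ (d1 - 1) * ((m + ⌈V0 m⌉₊) - (m - tm))))))) : ℕ) : ℝ)
      * (4 * ((2:ℝ)^tm)^4)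
      ≤ ((4 * 300^3 * s * 2^(2*s) + 1) : ℝ) * (m:ℝ) ^ (2 * ((s:ℝ) - 2) + 3 / 5) := by
  have hm0 : (0:ℝ) < m := by exact_mod_cast hm
  have hm1 : (1:ℝ) ≤ m := by exact_mod_cast hm
  have hL0 : 0 ≤ Real.logb 2 m := Real.logb_nonneg (by norm_num) hm1
  set L := Real.logb 2 m with hL
  set M := (m:ℝ) ^ ((1:ℝ)/15) with hM
  have hM1 : 1 ≤ M := by
    rw [hM, show (1:ℝ) = (m:ℝ)^(0:ℝ) from (Real.rpow_zero _).symm]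
    exact Real.rpow_le_rpow_of_exponent_le hm1 (by norm_num)
  have hM0 : 0 ≤ M := le_trans zero_le_one hM1
  -- bound on the window size
  have hweq : ((m + ⌈V0 m⌉₊) - (m - tm) : ℕ) = tm + ⌈V0 m⌉₊ := by
    generalize ⌈V0 m⌉₊ = c
    omega
  have hV0 : V0 m = 10 * L := rfl
  have hV00 : 0 ≤ V0 m := by rw [hV0]; positivity
  have hwR : (((m + ⌈V0 m⌉₊) - (m - tm) : ℕ) : ℝ) ≤ 11 * L + 2 := by
    rw [hweq]
    push_cast
    have h2 : (⌈V0 m⌉₊ : ℝ) ≤ V0 m + 1 := le_of_lt (Nat.ceil_lt_add_one hV00)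
    linarith [htm10, h2, hV0.le, hV0.ge]
  -- logarithm bound
  have hLb : L ≤ 23 * M := by
    have h1 : Real.log m = 15 * Real.log M := by
      rw [hM, Real.log_rpow hm0]; ring
    have h2 : Real.log M ≤ M := by
      have := Real.log_le_sub_one_of_pos (show (0:ℝ) < M by linarith)
      linarith
    have hlog2 : (0.6931471803 : ℝ) < Real.log 2 := Real.log_two_gt_d9
    have h3 : L = Real.log m / Real.log 2 := by rw [hL, Real.logb]
    rw [h3, h1, div_le_iff₀ (by linarith)]
    have hlogM0 : 0 ≤ Real.log M := Real.log_nonneg hM1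
    nlinarith
  have hw2 : (((m + ⌈V0 m⌉₊) - (m - tm) : ℕ) : ℝ) ≤ 300 * M := by
    calc (((m + ⌈V0 m⌉₊) - (m - tm) : ℕ) : ℝ) ≤ 11 * L + 2 := hwR
    _ ≤ 11 * (23 * M) + 2 * M := by nlinarith
    _ ≤ 300 * M := by nlinarith
  -- per-term power bound
  have hpow : ((2:ℝ)^tm)^4 ≤ (m:ℝ) ^ ((2:ℝ)/5) := by
    rw [← pow_mul, ← Real.rpow_natCast (2:ℝ) (tm*4)]
    have h2 : ((tm*4 : ℕ):ℝ) ≤ (2/5) * L := by push_cast; linarith [htm10]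
    calc (2:ℝ) ^ ((tm*4:ℕ):ℝ) ≤ (2:ℝ) ^ ((2/5) * L) :=
          Real.rpow_le_rpow_of_exponent_le (by norm_num) h2
    _ = ((2:ℝ) ^ L) ^ ((2:ℝ)/5) := by
          rw [mul_comm, Real.rpow_mul (by norm_num)]
    _ = (m:ℝ) ^ ((2:ℝ)/5) := by rw [hL, Real.rpow_logb (by norm_num) (by norm_num) hm0]
  -- (m+1) powers
  have hmp : ((m:ℝ)+1) ^ (2*s-4) ≤ 2^(2*s-4) * (m:ℝ)^(2*s-4) := by
    have h1 : (m:ℝ)+1 ≤ 2*m := by linarith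
    calc ((m:ℝ)+1) ^ (2*s-4) ≤ (2*(m:ℝ)) ^ (2*s-4) :=
          pow_le_pow_left₀ (by positivity) h1 _
    _ = 2^(2*s-4) * (m:ℝ)^(2*s-4) := mul_pow _ _ _
  -- M^3 = m^{1/5}
  have hM3 : M^3 = (m:ℝ) ^ ((1:ℝ)/5) := by
    rw [hM, ← Real.rpow_natCast ((m:ℝ) ^ ((1:ℝ)/15)) 3, ← Real.rpow_mul (le_of_lt hm0)]
    norm_num
  -- main chain
  have hLHS : ((s * ((m+1) ^ (s-2) * (((m + ⌈V0 m⌉₊) - (m - tm)) *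
      ((m+1) ^ (s - d1 - 1) * (((m + ⌈V0 m⌉₊) - (m - tm)) *
      ((m+1) ^ (d1 - 1) * ((m + ⌈V0 m⌉₊) - (m - tm))))))) : ℕ) : ℝ)
      = (s:ℝ) * (((m:ℝ)+1) ^ (s-2) * (((m:ℝ)+1) ^ (s-d1-1) * ((m:ℝ)+1) ^ (d1-1)))
        * ((((m + ⌈V0 m⌉₊) - (m - tm) : ℕ) : ℝ))^3 := by
    push_cast
    ring
  rw [hLHS]
  have hpowmerge : ((m:ℝ)+1) ^ (s-2) * (((m:ℝ)+1) ^ (s-d1-1) * ((m:ℝ)+1) ^ (d1-1))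
      = ((m:ℝ)+1) ^ (2*s-4) := by
    rw [← pow_add, ← pow_add]
    congr 1
    omega
  rw [hpowmerge]
  have hstep : (s:ℝ) * ((m:ℝ)+1) ^ (2*s-4) * ((((m + ⌈V0 m⌉₊) - (m - tm) : ℕ) : ℝ))^3
      * (4 * ((2:ℝ)^tm)^4)
      ≤ (s:ℝ) * (2^(2*s-4) * (m:ℝ)^(2*s-4)) * (300 * M)^3 * (4 * (m:ℝ)^((2:ℝ)/5)) := by
    have hs0 : (0:ℝ) ≤ s := by positivity
    refine mul_le_mul (mul_le_mul (mul_le_mul_of_nonneg_left hmp hs0)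
      (pow_le_pow_left₀ (Nat.cast_nonneg _) hw2 3) (by positivity) (by positivity))
      (mul_le_mul_of_nonneg_left hpow (by norm_num)) (by positivity) (by positivity)
  refine le_trans hstep ?_
  have hrw : (s:ℝ) * (2^(2*s-4) * (m:ℝ)^(2*s-4)) * (300 * M)^3 * (4 * (m:ℝ)^((2:ℝ)/5))
      = (4 * 300^3 * (s:ℝ) * 2^(2*s-4)) *
        ((m:ℝ)^(2*s-4) * ((m:ℝ)^((1:ℝ)/5) * (m:ℝ)^((2:ℝ)/5))) := by
    rw [mul_pow, hM3]
    ring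
  rw [hrw]
  have hexp : (m:ℝ)^(2*s-4) * ((m:ℝ)^((1:ℝ)/5) * (m:ℝ)^((2:ℝ)/5))
      = (m:ℝ) ^ (2 * ((s:ℝ) - 2) + 3 / 5) := by
    rw [← Real.rpow_natCast (m:ℝ) (2*s-4), ← Real.rpow_add hm0, ← Real.rpow_add hm0]
    congr 1
    have : ((2*s-4 : ℕ) : ℝ) = 2*(s:ℝ) - 4 := by
      have h4 : 4 ≤ 2*s := by omega
      push_cast [Nat.cast_sub h4]
      ring
    rw [this]
    ring
  rw [hexp]
  apply mul_le_mul_of_nonneg_right ?_ (Real.rpow_nonneg (le_of_lt hm0) _)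
  have h2p : (2:ℝ)^(2*s-4) ≤ 2^(2*s) := by
    apply pow_le_pow_right₀ (by norm_num)
    omega
  have hs0 : (0:ℝ) ≤ s := by positivity
  nlinarith [pow_pos (show (0:ℝ) < 2 by norm_num) (2*s), sq_nonneg ((s:ℝ))]

end Statement13Aux7

set_option maxHeartbeats 4000000 in
/-- Lemma 5: for any partition `J = (J₁,J₂,J₃)` of `{1,…,s}`
with `d₁ = #J₁ < s` and any `1 ≤ k₁, k₂ ≤ m`,
`|Υ_{d₁,d₂,d₃,J,k}| ≪ m^{2(s-2)+3/5}`, with the implied constant depending only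
on `s`. -/
theorem statement13 (s : ℕ) (hs : 2 ≤ s) :
    ∃ c : ℝ, 0 < c ∧ ∀ J1 J2 J3 : Finset (Fin s),
      J1 ∪ J2 ∪ J3 = Finset.univ → Disjoint J1 J2 → Disjoint J1 J3 → Disjoint J2 J3 →
      J1.card < s →
      ∀ (m tm : ℕ), 1 ≤ m →
        ∀ C : Fin s → Matrix (Fin m) (Fin m) (ZMod 2),
          IsNet tm m s (fun n : Fin (2 ^ m) => netPoint m s C (n : ℕ)) →
          (tm : ℝ) ≤ Real.logb 2 m / 10 →
          ∀ k1 k2 : ℕ, k1 ∈ Finset.Icc 1 m → k2 ∈ Finset.Icc 1 m →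
            |Ups m s tm C J1 J2 J3 k1 k2| ≤ c * (m : ℝ) ^ (2 * ((s : ℝ) - 2) + 3 / 5) := by
  classical
  refine ⟨(4 * 300^3 * s * 2^(2*s) + 1 : ℝ), by positivity, ?_⟩
  intro J1 J2 J3 hunion hd12 hd13 hd23 hJ1c m tm hm C hnet htm10 k1 k2 hk1m hk2m
  obtain ⟨hk11, hk1m'⟩ := Finset.mem_Icc.mp hk1m
  obtain ⟨hk21, hk2m'⟩ := Finset.mem_Icc.mp hk2m
  have hm0 : (0:ℝ) < m := by exact_mod_cast hm
  have hRHS0 : 0 ≤ (4 * 300^3 * (s:ℝ) * 2^(2*s) + 1) * (m : ℝ) ^ (2 * ((s : ℝ) - 2) + 3 / 5) := by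
    positivity
  -- tm ≤ m
  have htmm : tm ≤ m := by
    have h1 : Real.log m ≤ (m:ℝ) - 1 := Real.log_le_sub_one_of_pos hm0
    have hlog2 : (0.6931471803:ℝ) < Real.log 2 := Real.log_two_gt_d9
    have h2 : Real.logb 2 m = Real.log m / Real.log 2 := rfl
    have h4 : Real.log m / Real.log 2 / 10 ≤ (m:ℝ) := by
      rw [div_div, div_le_iff₀ (by nlinarith)]
      nlinarith
    have : (tm:ℝ) ≤ (m:ℝ) := by
      rw [h2] at htm10
      linarith
    exact_mod_cast this
  haveI : Nonempty (Fin s) := ⟨⟨0, by omega⟩⟩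
  -- basic facts about IndexSet membership
  have hIdx : ∀ (k : ℕ) (A : Fin s → ℕ), A ∈ IndexSet m s tm k →
      (∀ i, A i ≤ m) ∧ (∀ i, A i ≤ k) ∧ (∃ i, A i = k) ∧
        a0F A ∈ Finset.Ioc (m - tm) (m + ⌈V0 m⌉₊) := by
    intro k A hA
    rw [IndexSet, Finset.mem_filter, Fintype.mem_piFinset] at hA
    obtain ⟨hpi, hsup, hlow, hhigh⟩ := hA
    refine ⟨fun i => by have := hpi i; rw [Finset.mem_range] at this; omega,
      fun i => hsup ▸ Finset.le_sup (Finset.mem_univ i), ?_, ?_⟩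
    · obtain ⟨i, _, hi⟩ := Finset.exists_mem_eq_sup Finset.univ Finset.univ_nonempty A
      exact ⟨i, by rw [← hi, hsup]⟩
    · rw [Finset.mem_Ioc]
      constructor
      · have h5 : ((m - tm : ℕ):ℝ) < a0F A := by rw [Nat.cast_sub htmm]; exact hlow
        exact_mod_cast h5
      · have h1 : (a0F A : ℝ) < (m:ℝ) + ⌈V0 m⌉₊ := lt_of_lt_of_le hhigh (by
          have := Nat.le_ceil (V0 m); linarith)
        have h2 : (a0F A : ℝ) < ((m + ⌈V0 m⌉₊ : ℕ):ℝ) := by push_cast; linarith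
        have h3 : a0F A < m + ⌈V0 m⌉₊ := by exact_mod_cast h2
        omega
  -- Psi bound on IndexSet
  have hPsiB : ∀ (k : ℕ) (A : Fin s → ℕ), A ∈ IndexSet m s tm k →
      ∀ t y, |PsiF m s C A t y| ≤ (2:ℝ)^tm := by
    intro k A hA t y
    have h1 := (hIdx k A hA).1
    have h2 := (hIdx k A hA).2.2.2
    rw [Finset.mem_Ioc] at h2
    exact abs_PsiF_le hnet htmm A h1 h2.1 t y
  -- case J1 = ∅
  rcases Finset.eq_empty_or_nonempty J1 with hJ1e | hJ1ne
  · have hzero : Ups m s tm C J1 J2 J3 k1 k2 = 0 := by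
      rw [Ups]
      apply Finset.sum_eq_zero; intro A1 hA1
      apply Finset.sum_eq_zero; intro A2 hA2
      apply Finset.sum_eq_zero; intro A3 _
      apply Finset.sum_eq_zero; intro A4 _
      by_cases hJ : (Finset.univ.filter fun i => A1 i = A2 i) = J1 ∧
          (Finset.univ.filter fun i => A1 i < A2 i) = J2 ∧
          (Finset.univ.filter fun i => A2 i < A1 i) = J3 ∧
          (Finset.univ.filter fun i => A3 i = A4 i) = J1 ∧
          (Finset.univ.filter fun i => A3 i < A4 i) = J2 ∧
          (Finset.univ.filter fun i => A4 i < A3 i) = J3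
      · obtain ⟨i0, hi0⟩ := (hIdx k1 A1 hA1).2.2.1
        have hA2ne : A2 i0 ≠ k1 := by
          intro hc
          have hmem : i0 ∈ Finset.univ.filter fun i => A1 i = A2 i :=
            Finset.mem_filter.mpr ⟨Finset.mem_univ _, by rw [hi0, hc]⟩
          rw [hJ.1, hJ1e] at hmem
          exact absurd hmem (Finset.notMem_empty i0)
        have hmix : ¬ ((A1 i0 = k1) ↔ (A2 i0 = k1)) := by
          intro hiff
          exact hA2ne (hiff.mp hi0)
        have h0 : (fun t y => ThetaF m s C A1 A2 k1 t y * ThetaF m s C A3 A4 k2 t y)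
            = fun _ _ => (0:ℝ) :=
          funext fun t => funext fun y => by
            rw [theta_zero C A1 A2 k1 hk11 hk1m' i0 hmix, zero_mul]
        rw [h0]
        have hEm0 : Em m s (fun _ _ => (0:ℝ)) = 0 := by
          rw [Em]
          simp
        rw [hEm0, zero_mul]
      · rw [if_neg hJ, mul_zero]
    rw [hzero, abs_zero]
    exact hRHS0
  -- main case : J1 nonempty
  have hd1 : 1 ≤ J1.card := Finset.card_pos.mpr hJ1ne
  -- the quadruple set and the summand
  set Q : Finset (((Fin s → ℕ) × (Fin s → ℕ)) × ((Fin s → ℕ) × (Fin s → ℕ))) :=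
    (IndexSet m s tm k1 ×ˢ IndexSet m s tm k1) ×ˢ (IndexSet m s tm k2 ×ˢ IndexSet m s tm k2)
    with hQdef
  set Tq : (((Fin s → ℕ) × (Fin s → ℕ)) × ((Fin s → ℕ) × (Fin s → ℕ))) → ℝ :=
    fun q => (Em m s fun t y =>
        ThetaF m s C q.1.1 q.1.2 k1 t y * ThetaF m s C q.2.1 q.2.2 k2 t y) *
      (if (Finset.univ.filter fun i => q.1.1 i = q.1.2 i) = J1 ∧
          (Finset.univ.filter fun i => q.1.1 i < q.1.2 i) = J2 ∧
          (Finset.univ.filter fun i => q.1.2 i < q.1.1 i) = J3 ∧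
          (Finset.univ.filter fun i => q.2.1 i = q.2.2 i) = J1 ∧
          (Finset.univ.filter fun i => q.2.1 i < q.2.2 i) = J2 ∧
          (Finset.univ.filter fun i => q.2.2 i < q.2.1 i) = J3 then (1 : ℝ) else 0) with hTq
  have hsplit : ∀ (g : (((Fin s → ℕ) × (Fin s → ℕ)) × ((Fin s → ℕ) × (Fin s → ℕ))) → ℝ),
      ∑ q ∈ Q, g q = ∑ A1 ∈ IndexSet m s tm k1, ∑ A2 ∈ IndexSet m s tm k1,
        ∑ A3 ∈ IndexSet m s tm k2, ∑ A4 ∈ IndexSet m s tm k2, g ((A1, A2), (A3, A4)) := by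
    intro g
    rw [hQdef, Finset.sum_product, Finset.sum_product]
    apply Finset.sum_congr rfl; intro A1 _
    apply Finset.sum_congr rfl; intro A2 _
    rw [Finset.sum_product]
  have hUps : Ups m s tm C J1 J2 J3 k1 k2 = ∑ q ∈ Q, Tq q := by
    rw [hsplit Tq, Ups]
  -- the goodness predicate
  set Good : (((Fin s → ℕ) × (Fin s → ℕ)) × ((Fin s → ℕ) × (Fin s → ℕ))) → Prop :=
    fun q => ((Finset.univ.filter fun i => q.1.1 i = q.1.2 i) = J1 ∧
        (Finset.univ.filter fun i => q.1.1 i < q.1.2 i) = J2 ∧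
        (Finset.univ.filter fun i => q.1.2 i < q.1.1 i) = J3 ∧
        (Finset.univ.filter fun i => q.2.1 i = q.2.2 i) = J1 ∧
        (Finset.univ.filter fun i => q.2.1 i < q.2.2 i) = J2 ∧
        (Finset.univ.filter fun i => q.2.2 i < q.2.1 i) = J3) ∧
      (∀ i, (q.1.1 i = k1 ↔ q.1.2 i = k1)) ∧
      (∀ i, (q.2.1 i = k2 ↔ q.2.2 i = k2)) ∧
      (∀ (i0 : Fin s) (j0 : Fin m),
        ((if (j0:ℕ)+1 < k1 then
            ((if q.1.1 i0 = (j0:ℕ)+1 then 1 else 0) + (if q.1.2 i0 = (j0:ℕ)+1 then 1 else 0))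
          else 0)
          + (if (j0:ℕ)+1 < k2 then
            ((if q.2.1 i0 = (j0:ℕ)+1 then 1 else 0) + (if q.2.2 i0 = (j0:ℕ)+1 then 1 else 0))
          else 0)) % 2 = 0) with hGood
  -- bad terms vanish
  have hbad : ∀ q ∈ Q.filter (fun q => ¬ Good q), |Tq q| = 0 := by
    intro q hq
    rw [Finset.mem_filter] at hq
    obtain ⟨hqQ, hnG⟩ := hq
    by_cases hJ : (Finset.univ.filter fun i => q.1.1 i = q.1.2 i) = J1 ∧
        (Finset.univ.filter fun i => q.1.1 i < q.1.2 i) = J2 ∧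
        (Finset.univ.filter fun i => q.1.2 i < q.1.1 i) = J3 ∧
        (Finset.univ.filter fun i => q.2.1 i = q.2.2 i) = J1 ∧
        (Finset.univ.filter fun i => q.2.1 i < q.2.2 i) = J2 ∧
        (Finset.univ.filter fun i => q.2.2 i < q.2.1 i) = J3
    · have hEm0 : Em m s (fun t y =>
          ThetaF m s C q.1.1 q.1.2 k1 t y * ThetaF m s C q.2.1 q.2.2 k2 t y) = 0 := by
        by_cases hg1 : ∀ i, (q.1.1 i = k1 ↔ q.1.2 i = k1)
        · by_cases hg2 : ∀ i, (q.2.1 i = k2 ↔ q.2.2 i = k2)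
          · have hg3 : ¬ ∀ (i0 : Fin s) (j0 : Fin m),
                ((if (j0:ℕ)+1 < k1 then
                    ((if q.1.1 i0 = (j0:ℕ)+1 then 1 else 0)
                      + (if q.1.2 i0 = (j0:ℕ)+1 then 1 else 0))
                  else 0)
                  + (if (j0:ℕ)+1 < k2 then
                    ((if q.2.1 i0 = (j0:ℕ)+1 then 1 else 0)
                      + (if q.2.2 i0 = (j0:ℕ)+1 then 1 else 0))
                  else 0)) % 2 = 0 := by
              intro hforall
              exact hnG ⟨hJ, hg1, hg2, hforall⟩
            rw [not_forall] at hg3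
            obtain ⟨i0, hg3'⟩ := hg3
            rw [not_forall] at hg3'
            obtain ⟨j0, hodd⟩ := hg3'
            apply em_theta_theta_zero C q.1.1 q.1.2 q.2.1 q.2.2 k1 k2 i0 j0
            apply sign_of_odd
            omega
          · rw [not_forall] at hg2
            obtain ⟨i0, hmix⟩ := hg2
            have h0 : (fun t y =>
                ThetaF m s C q.1.1 q.1.2 k1 t y * ThetaF m s C q.2.1 q.2.2 k2 t y)
                = fun _ _ => (0:ℝ) :=
              funext fun t => funext fun y => by
                rw [theta_zero C q.2.1 q.2.2 k2 hk21 hk2m' i0 hmix, mul_zero]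
            rw [h0, Em]
            simp
        · rw [not_forall] at hg1
          obtain ⟨i0, hmix⟩ := hg1
          have h0 : (fun t y =>
              ThetaF m s C q.1.1 q.1.2 k1 t y * ThetaF m s C q.2.1 q.2.2 k2 t y)
              = fun _ _ => (0:ℝ) :=
            funext fun t => funext fun y => by
              rw [theta_zero C q.1.1 q.1.2 k1 hk11 hk1m' i0 hmix, zero_mul]
          rw [h0, Em]
          simp
      rw [hTq]
      dsimp only
      rw [hEm0, zero_mul, abs_zero]
    · rw [hTq]
      dsimp only
      rw [if_neg hJ, mul_zero, abs_zero]
  -- good terms are bounded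
  have hgood_bound : ∀ q ∈ Q.filter Good, |Tq q| ≤ 4 * ((2:ℝ)^tm)^4 := by
    intro q hq
    rw [Finset.mem_filter] at hq
    obtain ⟨hqQ, _⟩ := hq
    rw [hQdef, Finset.mem_product] at hqQ
    obtain ⟨hq12, hq34⟩ := hqQ
    rw [Finset.mem_product] at hq12 hq34
    rw [hTq]
    dsimp only
    rw [abs_mul]
    have hite : |(if (Finset.univ.filter fun i => q.1.1 i = q.1.2 i) = J1 ∧
        (Finset.univ.filter fun i => q.1.1 i < q.1.2 i) = J2 ∧
        (Finset.univ.filter fun i => q.1.2 i < q.1.1 i) = J3 ∧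
        (Finset.univ.filter fun i => q.2.1 i = q.2.2 i) = J1 ∧
        (Finset.univ.filter fun i => q.2.1 i < q.2.2 i) = J2 ∧
        (Finset.univ.filter fun i => q.2.2 i < q.2.1 i) = J3 then (1:ℝ) else 0)| ≤ 1 := by
      split_ifs <;> simp
    have hEmB : |Em m s (fun t y =>
        ThetaF m s C q.1.1 q.1.2 k1 t y * ThetaF m s C q.2.1 q.2.2 k2 t y)|
        ≤ 4 * ((2:ℝ)^tm)^4 := by
      apply abs_Em_le
      intro t y
      rw [abs_mul]
      have b1 := abs_ThetaF_le q.1.1 q.1.2 k1 ((2:ℝ)^tm)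
        (hPsiB k1 _ hq12.1) (hPsiB k1 _ hq12.2) t y
      have b2 := abs_ThetaF_le q.2.1 q.2.2 k2 ((2:ℝ)^tm)
        (hPsiB k2 _ hq34.1) (hPsiB k2 _ hq34.2) t y
      calc |ThetaF m s C q.1.1 q.1.2 k1 t y| * |ThetaF m s C q.2.1 q.2.2 k2 t y|
          ≤ (2 * ((2:ℝ)^tm)^2) * (2 * ((2:ℝ)^tm)^2) :=
            mul_le_mul b1 b2 (abs_nonneg _) (by positivity)
      _ = 4 * ((2:ℝ)^tm)^4 := by ring
    calc |Em m s (fun t y =>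
          ThetaF m s C q.1.1 q.1.2 k1 t y * ThetaF m s C q.2.1 q.2.2 k2 t y)| * _
        ≤ (4 * ((2:ℝ)^tm)^4) * 1 := mul_le_mul hEmB hite (abs_nonneg _) (by positivity)
    _ = 4 * ((2:ℝ)^tm)^4 := by ring
  -- counting the good terms
  have hcount : (Q.filter Good).card ≤ s * ((m+1) ^ (s-2) * (((m + ⌈V0 m⌉₊) - (m - tm)) *
      ((m+1) ^ (s - J1.card - 1) * (((m + ⌈V0 m⌉₊) - (m - tm)) *
      ((m+1) ^ (J1.card - 1) * ((m + ⌈V0 m⌉₊) - (m - tm))))))) := by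
    apply count_main hs J1 hJ1ne hJ1c
    intro q hq
    rw [Finset.mem_filter] at hq
    obtain ⟨hqQ, hG⟩ := hq
    rw [hGood] at hG
    obtain ⟨⟨hJa, hJb, hJc, hJd, hJe, hJf⟩, hg1, hg2, hg3⟩ := hG
    rw [hQdef, Finset.mem_product] at hqQ
    obtain ⟨hq12, hq34⟩ := hqQ
    rw [Finset.mem_product] at hq12 hq34
    have hI1 := hIdx k1 q.1.1 hq12.1
    have hI2 := hIdx k1 q.1.2 hq12.2
    have hI3 := hIdx k2 q.2.1 hq34.1
    have hI4 := hIdx k2 q.2.2 hq34.2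
    -- off-diagonal determination
    have hdet : ∀ i, i ∉ J1 → q.2.1 i = q.1.1 i ∧ q.2.2 i = q.1.2 i := by
      intro i hiJ
      have hior : i ∈ J2 ∨ i ∈ J3 := by
        have h1 : i ∈ J1 ∪ J2 ∪ J3 := by rw [hunion]; exact Finset.mem_univ i
        rw [Finset.mem_union, Finset.mem_union] at h1
        tauto
      have hg3i : ∀ v, 1 ≤ v → v ≤ m →
          ((if v < k1 then
              ((if q.1.1 i = v then 1 else 0) + (if q.1.2 i = v then 1 else 0)) else 0)
            + (if v < k2 then
              ((if q.2.1 i = v then 1 else 0) + (if q.2.2 i = v then 1 else 0)) else 0)) % 2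
            = 0 := by
        intro v h1v hvm
        have hvm' : v - 1 < m := by omega
        have hc := hg3 i ⟨v-1, hvm'⟩
        have hv : ((⟨v-1, hvm'⟩ : Fin m) : ℕ) + 1 = v := by
          show v - 1 + 1 = v
          omega
        rw [hv] at hc
        exact hc
      rcases hior with hi2 | hi3
      · have h12lt : q.1.1 i < q.1.2 i := by
          have : i ∈ Finset.univ.filter fun j => q.1.1 j < q.1.2 j := by rw [hJb]; exact hi2
          exact (Finset.mem_filter.mp this).2
        have h34lt : q.2.1 i < q.2.2 i := by
          have : i ∈ Finset.univ.filter fun j => q.2.1 j < q.2.2 j := by rw [hJe]; exact hi2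
          exact (Finset.mem_filter.mp this).2
        have hdet' := coord_det (hI1.1 i) (hI2.1 i) (hI3.1 i) (hI4.1 i)
          (hI2.2.1 i) (hI4.2.1 i) h12lt h34lt (hg1 i) (hg2 i) hg3i
        exact ⟨hdet'.1, hdet'.2⟩
      · have h21lt : q.1.2 i < q.1.1 i := by
          have : i ∈ Finset.univ.filter fun j => q.1.2 j < q.1.1 j := by rw [hJc]; exact hi3
          exact (Finset.mem_filter.mp this).2
        have h43lt : q.2.2 i < q.2.1 i := by
          have : i ∈ Finset.univ.filter fun j => q.2.2 j < q.2.1 j := by rw [hJf]; exact hi3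
          exact (Finset.mem_filter.mp this).2
        have hg3i' : ∀ v, 1 ≤ v → v ≤ m →
            ((if v < k1 then
                ((if q.1.2 i = v then 1 else 0) + (if q.1.1 i = v then 1 else 0)) else 0)
              + (if v < k2 then
                ((if q.2.2 i = v then 1 else 0) + (if q.2.1 i = v then 1 else 0)) else 0)) % 2
              = 0 := by
          intro v h1 h2
          have := hg3i v h1 h2
          split_ifs at this ⊢ <;> omega
        have hdet' := coord_det (hI2.1 i) (hI1.1 i) (hI4.1 i) (hI3.1 i)
          (hI1.2.1 i) (hI3.2.1 i) h21lt h43lt (hg1 i).symm (hg2 i).symm hg3i'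
        exact ⟨hdet'.2, hdet'.1⟩
    refine ⟨hI1.1, hI2.1, hI3.1, hI1.2.2.1, ?_, ?_, ?_, ?_, hI1.2.2.2, hI2.2.2.2, hI3.2.2.2⟩
    · intro i hiJ
      have : i ∈ Finset.univ.filter fun j => q.1.1 j = q.1.2 j := by rw [hJa]; exact hiJ
      exact ((Finset.mem_filter.mp this).2).symm
    · intro i hiJ
      have : i ∈ Finset.univ.filter fun j => q.2.1 j = q.2.2 j := by rw [hJd]; exact hiJ
      exact ((Finset.mem_filter.mp this).2).symm
    · intro i hiJ
      exact (hdet i hiJ).1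
    · intro i hiJ
      exact (hdet i hiJ).2
  -- assemble
  rw [hUps]
  calc |∑ q ∈ Q, Tq q| ≤ ∑ q ∈ Q, |Tq q| := Finset.abs_sum_le_sum_abs _ _
  _ = ∑ q ∈ Q.filter Good, |Tq q| + ∑ q ∈ Q.filter (fun q => ¬ Good q), |Tq q| :=
      (Finset.sum_filter_add_sum_filter_not Q Good _).symm
  _ = ∑ q ∈ Q.filter Good, |Tq q| := by
      rw [Finset.sum_congr rfl hbad, Finset.sum_const, smul_zero, add_zero]
  _ ≤ ∑ _q ∈ Q.filter Good, (4 * ((2:ℝ)^tm)^4) := Finset.sum_le_sum hgood_bound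
  _ = ((Q.filter Good).card : ℝ) * (4 * ((2:ℝ)^tm)^4) := by
      rw [Finset.sum_const, nsmul_eq_mul]
  _ ≤ ((s * ((m+1) ^ (s-2) * (((m + ⌈V0 m⌉₊) - (m - tm)) *
        ((m+1) ^ (s - J1.card - 1) * (((m + ⌈V0 m⌉₊) - (m - tm)) *
        ((m+1) ^ (J1.card - 1) * ((m + ⌈V0 m⌉₊) - (m - tm))))))) : ℕ) : ℝ)
        * (4 * ((2:ℝ)^tm)^4) := by
      apply mul_le_mul_of_nonneg_right ?_ (by positivity)
      exact_mod_cast hcount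
  _ ≤ (4 * 300^3 * (s:ℝ) * 2^(2*s) + 1) * (m : ℝ) ^ (2 * ((s : ℝ) - 2) + 3 / 5) := by
      have := numeric_final s m tm J1.card hs hm hd1 hJ1c htm10 htmm
      calc _ ≤ _ := this
      _ = _ := by push_cast; ring_nf
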